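/- arXiv:1612.05440 — 7 statements merged into one kernel-verified Lean document; each statement's English description precedes it below -/
import Mathlib

section
/- Let 𝒢 = (G_1, …, G_τ) be a graph history on a finite vertex set V with |V| = n, and let S_0 = V, S_i = S_{i-1} \ {v_i} (i = 1, …, n−1) be a score_m peeling sequence, i.e. at each step v_i attains the minimum of score_m(·, 𝒢[S_{i-1}]) over S_{i-1}. Let S* ⊆ V be any nonempty subset such that some removed vertex v_i belongs to S*, and let i be the least index with v_i ∈ S*. Then S* ⊆ S_{i-1} and f_mm(S_{i-1}, 𝒢) ≥ f_mm(S*, 𝒢). -/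
open scoped Classical
open Finset

/-- The degree of `u` in the subgraph of `G` induced by the vertex set `S`. -/
noncomputable def degIn {n : ℕ} (G : SimpleGraph (Fin n)) (S : Finset (Fin n)) (u : Fin n) : ℕ :=
  (S.filter fun v => G.Adj u v).card

/-- The number of edges of the subgraph of `G` induced by `S`. -/
noncomputable def edgesIn {n : ℕ} (G : SimpleGraph (Fin n)) (S : Finset (Fin n)) : ℕ :=
  ((S ×ˢ S).filter fun p => p.1 < p.2 ∧ G.Adj p.1 p.2).card

/-- Minimum density `d_m(S, G)`: the minimum degree in the induced subgraph `G[S]`. -/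
noncomputable def minDensity {n : ℕ} (G : SimpleGraph (Fin n)) (S : Finset (Fin n)) : ℕ :=
  sInf ((fun u => degIn G S u) '' (S : Set (Fin n)))

/-- Average density `d_a(S, G) = 2·|E(G[S])| / |S|`. -/
noncomputable def avgDensity {n : ℕ} (G : SimpleGraph (Fin n)) (S : Finset (Fin n)) : ℝ :=
  2 * (edgesIn G S : ℝ) / (S.card : ℝ)

/-- `f_mm(S, 𝒢) = min_t d_m(S, G_t)`. -/
noncomputable def fmm {n τ : ℕ} (G : Fin τ → SimpleGraph (Fin n)) (S : Finset (Fin n)) : ℕ :=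
  sInf (Set.range fun t => minDensity (G t) S)

/-- `f_am(S, 𝒢) = (1/τ) · Σ_t d_m(S, G_t)`. -/
noncomputable def fam {n τ : ℕ} (G : Fin τ → SimpleGraph (Fin n)) (S : Finset (Fin n)) : ℝ :=
  (1 / (τ : ℝ)) * ∑ t, (minDensity (G t) S : ℝ)

/-- `f_ma(S, 𝒢) = min_t d_a(S, G_t)`. -/
noncomputable def fma {n τ : ℕ} (G : Fin τ → SimpleGraph (Fin n)) (S : Finset (Fin n)) : ℝ :=
  sInf (Set.range fun t => avgDensity (G t) S)

/-- `f_aa(S, 𝒢) = (1/τ) · Σ_t d_a(S, G_t)`. -/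
noncomputable def faa {n τ : ℕ} (G : Fin τ → SimpleGraph (Fin n)) (S : Finset (Fin n)) : ℝ :=
  (1 / (τ : ℝ)) * ∑ t, avgDensity (G t) S

/-- `score_m(v, 𝒢[S]) = min_t degree(v, G_t[S])`. -/
noncomputable def scoreM {n τ : ℕ} (G : Fin τ → SimpleGraph (Fin n)) (S : Finset (Fin n))
    (v : Fin n) : ℕ :=
  sInf (Set.range fun t => degIn (G t) S v)

/-- `score_a(v, 𝒢[S]) = (1/τ) · Σ_t degree(v, G_t[S])`. -/
noncomputable def scoreA {n τ : ℕ} (G : Fin τ → SimpleGraph (Fin n)) (S : Finset (Fin n))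
    (v : Fin n) : ℝ :=
  (1 / (τ : ℝ)) * ∑ t, (degIn (G t) S v : ℝ)

/-- A `score_m` peeling sequence: `S 0 = V`, and at each step the removed vertex `v i`
minimizes `score_m` over the current set. -/
def IsScoreMPeeling {n τ : ℕ} (G : Fin τ → SimpleGraph (Fin n)) (S : ℕ → Finset (Fin n))
    (v : ℕ → Fin n) : Prop :=
  S 0 = Finset.univ ∧
    ∀ i < n - 1, v i ∈ S i ∧ S (i + 1) = S i \ {v i} ∧
      ∀ u ∈ S i, scoreM G (S i) (v i) ≤ scoreM G (S i) u

/-- A `score_a` peeling sequence: `S 0 = V`, and at each step the removed vertex `v i`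
minimizes `score_a` over the current set. -/
def IsScoreAPeeling {n τ : ℕ} (G : Fin τ → SimpleGraph (Fin n)) (S : ℕ → Finset (Fin n))
    (v : ℕ → Fin n) : Prop :=
  S 0 = Finset.univ ∧
    ∀ i < n - 1, v i ∈ S i ∧ S (i + 1) = S i \ {v i} ∧
      ∀ u ∈ S i, scoreA G (S i) (v i) ≤ scoreA G (S i) u

/-! No vertex of `S*` is peeled before `v j`, so `S* ⊆ S j`. Then
`f_mm(S*) ≤ score_m(v j, S*) ≤ score_m(v j, S j) = min_{u ∈ S j} score_m(u, S j) ≤ f_mm(S j)`,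
where the middle step is monotonicity of degrees in the vertex set and the last one holds because
a minimum degree over `S j` at time `t` is attained by some `u ∈ S j`, whose score is at most that
degree. -/

section Density

variable {n τ : ℕ}

theorem degIn_mono (G : SimpleGraph (Fin n)) {S T : Finset (Fin n)} (hST : S ⊆ T) (u : Fin n) :
    degIn G S u ≤ degIn G T u :=
  card_le_card (filter_subset_filter _ hST)

theorem minDensity_le_degIn (G : SimpleGraph (Fin n)) {S : Finset (Fin n)} {u : Fin n}
    (hu : u ∈ S) : minDensity G S ≤ degIn G S u :=
  Nat.sInf_le ⟨u, hu, rfl⟩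

theorem exists_degIn_eq_minDensity (G : SimpleGraph (Fin n)) {S : Finset (Fin n)}
    (hS : S.Nonempty) : ∃ u ∈ S, degIn G S u = minDensity G S := by
  obtain ⟨u, hu⟩ := hS
  exact Nat.sInf_mem ⟨_, Set.mem_image_of_mem _ (mem_coe.2 hu)⟩

theorem scoreM_le_degIn (G : Fin τ → SimpleGraph (Fin n)) (S : Finset (Fin n)) (u : Fin n)
    (t : Fin τ) : scoreM G S u ≤ degIn (G t) S u :=
  ciInf_le' (fun t => degIn (G t) S u) t

theorem scoreM_mono (G : Fin τ → SimpleGraph (Fin n)) {S T : Finset (Fin n)} (hST : S ⊆ T)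
    (u : Fin n) : scoreM G S u ≤ scoreM G T u :=
  ciInf_mono (OrderBot.bddBelow _) fun t => degIn_mono (G t) hST u

theorem fmm_le_scoreM (G : Fin τ → SimpleGraph (Fin n)) {S : Finset (Fin n)} {u : Fin n}
    (hu : u ∈ S) : fmm G S ≤ scoreM G S u :=
  ciInf_mono (OrderBot.bddBelow _) fun t => minDensity_le_degIn (G t) hu

theorem scoreM_le_fmm_of_isMin (G : Fin τ → SimpleGraph (Fin n)) {S : Finset (Fin n)}
    {v : Fin n} (hv : v ∈ S) (hmin : ∀ u ∈ S, scoreM G S v ≤ scoreM G S u) :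
    scoreM G S v ≤ fmm G S := by
  rcases isEmpty_or_nonempty (Fin τ) with _ | _
  · exact (Nat.iInf_of_empty _).trans_le (Nat.zero_le _)
  · refine le_ciInf fun t => ?_
    obtain ⟨u, hu, hdeg⟩ := exists_degIn_eq_minDensity (G t) ⟨v, hv⟩
    calc scoreM G S v ≤ scoreM G S u := hmin u hu
      _ ≤ degIn (G t) S u := scoreM_le_degIn G S u t
      _ = minDensity (G t) S := hdeg

end Density

theorem IsScoreMPeeling.subset_of_forall_lt_notMem {n τ : ℕ} {G : Fin τ → SimpleGraph (Fin n)}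
    {S : ℕ → Finset (Fin n)} {v : ℕ → Fin n} (hpeel : IsScoreMPeeling G S v)
    {T : Finset (Fin n)} {k : ℕ} (hk : k ≤ n - 1) (hT : ∀ i < k, v i ∉ T) : T ⊆ S k := by
  induction k with
  | zero => simp [hpeel.1]
  | succ k ih =>
    rw [(hpeel.2 k (by omega)).2.1]
    intro x hx
    refine mem_sdiff.2 ⟨ih (by omega) (fun i hi => hT i (by omega)) hx, ?_⟩
    intro hxv
    exact hT k k.lt_succ_self (mem_singleton.1 hxv ▸ hx)

theorem bff_mm_peeling_step_general {n τ : ℕ}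
    (G : Fin τ → SimpleGraph (Fin n)) (S : ℕ → Finset (Fin n)) (v : ℕ → Fin n)
    (hpeel : IsScoreMPeeling G S v)
    (Sstar : Finset (Fin n))
    (j : ℕ) (hj : j < n - 1) (hvj : v j ∈ Sstar) (hleast : ∀ i < j, v i ∉ Sstar) :
    Sstar ⊆ S j ∧ fmm G Sstar ≤ fmm G (S j) := by
  have hsub : Sstar ⊆ S j := hpeel.subset_of_forall_lt_notMem hj.le hleast
  obtain ⟨hvS, -, hmin⟩ := hpeel.2 j hj
  refine ⟨hsub, ?_⟩
  calc fmm G Sstar ≤ scoreM G Sstar (v j) := fmm_le_scoreM G hvj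
    _ ≤ scoreM G (S j) (v j) := scoreM_mono G hsub (v j)
    _ ≤ fmm G (S j) := scoreM_le_fmm_of_isMin G hvS hmin

/-- In a `score_m` peeling sequence, if `S*` is a nonempty subset containing
some removed vertex and `j` is the least index of a removed vertex of `S*`, then `S* ⊆ S j`
(the set from which `v j` is removed) and `f_mm(S j, 𝒢) ≥ f_mm(S*, 𝒢)`. -/
theorem bff_mm_peeling_step {n τ : ℕ} (hτ : 0 < τ)
    (G : Fin τ → SimpleGraph (Fin n)) (S : ℕ → Finset (Fin n)) (v : ℕ → Fin n)
    (hpeel : IsScoreMPeeling G S v)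
    (Sstar : Finset (Fin n)) (hSstar : Sstar.Nonempty)
    (j : ℕ) (hj : j < n - 1) (hvj : v j ∈ Sstar) (hleast : ∀ i < j, v i ∉ Sstar) :
    Sstar ⊆ S j ∧ fmm G Sstar ≤ fmm G (S j) :=
  bff_mm_peeling_step_general G S v hpeel Sstar j hj hvj hleast
end

section
/- Let V be a finite set with |V| = n and let w assign a nonnegative real weight w(u,v) = w(v,u) to each unordered pair of distinct vertices of V. For nonempty S ⊆ V define the weighted degree deg_w(u, S) = Σ_{v ∈ S, v ≠ u} w(u,v) and the weighted average density d_a^w(S) = (1/|S|)·Σ_{u ∈ S} deg_w(u, S). Let S_0 = V and, for i = 1, …, n−1, let S_i = S_{i-1} \ {v_i} where v_i attains the minimum of deg_w(·, S_{i-1}) over S_{i-1}. Then max_{0 ≤ i ≤ n−1} d_a^w(S_i) ≥ (1/2)·max_{∅ ≠ S ⊆ V} d_a^w(S). -/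
/-!
In a densest set `T`, deleting a vertex cannot raise the density, which forces every vertex of
`T` to have weighted degree at least `d(T)/2` in `T`. Look at the first step at which greedy
peeling removes a vertex `v` of `T`: the current set `S` still contains `T` and `v` has minimum
degree in `S`, so every vertex of `S` has degree at least `deg(v, S) ≥ deg(v, T) ≥ d(T)/2`,
whence `d(S) ≥ d(T)/2`. If no vertex of `T` is ever removed, `T` is the final singleton.
-/

open Finset

/-- The weighted degree `deg_w(u, S) = Σ_{v ∈ S, v ≠ u} w u v`. -/
noncomputable def wdeg {n : ℕ} (w : Fin n → Fin n → ℝ) (S : Finset (Fin n)) (u : Fin n) : ℝ :=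
  ∑ x ∈ S.erase u, w u x

/-- The weighted average density `d_a^w(S) = (1/|S|) · Σ_{u ∈ S} deg_w(u, S)`. -/
noncomputable def wavg {n : ℕ} (w : Fin n → Fin n → ℝ) (S : Finset (Fin n)) : ℝ :=
  (1 / (S.card : ℝ)) * ∑ u ∈ S, wdeg w S u

section ErasureChain

variable {α : Type*} [DecidableEq α] {m : ℕ} {S : ℕ → Finset α} {v : ℕ → α}

lemma card_eq_sub_of_erase_chain (hstep : ∀ i < m, v i ∈ S i ∧ S (i + 1) = S i \ {v i}) :
    ∀ i ≤ m, (S i).card = (S 0).card - i := by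
  intro i
  induction i with
  | zero => simp
  | succ i ih =>
    intro hi
    obtain ⟨hv, hS⟩ := hstep i (by omega)
    rw [hS, sdiff_singleton_eq_erase, card_erase_of_mem hv, ih (by omega)]
    omega

lemma subset_or_exists_mem_of_erase_chain (hS : ∀ i < m, S (i + 1) = S i \ {v i})
    {T : Finset α} (hT : T ⊆ S 0) :
    ∀ i ≤ m, T ⊆ S i ∨ ∃ j < i, T ⊆ S j ∧ v j ∈ T := by
  intro i
  induction i with
  | zero => exact fun _ => Or.inl hT
  | succ i ih =>
    intro hi
    rcases ih (by omega) with hTi | ⟨j, hj, hTj, hvj⟩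
    · by_cases hvi : v i ∈ T
      · exact Or.inr ⟨i, i.lt_succ_self, hTi, hvi⟩
      · left
        rw [hS i (by omega)]
        exact subset_sdiff.2 ⟨hTi, disjoint_singleton_right.2 hvi⟩
    · exact Or.inr ⟨j, by omega, hTj, hvj⟩

end ErasureChain

section WeightedDensity

variable {n : ℕ} {w : Fin n → Fin n → ℝ}

lemma wdeg_nonneg (hnonneg : ∀ u v, 0 ≤ w u v) (S : Finset (Fin n)) (u : Fin n) :
    0 ≤ wdeg w S u :=
  sum_nonneg fun x _ => hnonneg u x

lemma wdeg_mono (hnonneg : ∀ u v, 0 ≤ w u v) {S T : Finset (Fin n)} (h : S ⊆ T) (u : Fin n) :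
    wdeg w S u ≤ wdeg w T u :=
  sum_le_sum_of_subset_of_nonneg (erase_subset_erase _ h) fun x _ _ => hnonneg u x

lemma wavg_nonneg (hnonneg : ∀ u v, 0 ≤ w u v) (S : Finset (Fin n)) : 0 ≤ wavg w S :=
  mul_nonneg (by positivity) (sum_nonneg fun u _ => wdeg_nonneg hnonneg S u)

lemma le_wavg_of_forall_le_wdeg {S : Finset (Fin n)} (hS : S.Nonempty) {c : ℝ}
    (h : ∀ u ∈ S, c ≤ wdeg w S u) : c ≤ wavg w S := by
  have hcard : (0 : ℝ) < S.card := by exact_mod_cast hS.card_pos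
  rw [wavg, one_div, inv_mul_eq_div, le_div_iff₀ hcard, mul_comm, ← nsmul_eq_mul, ← sum_const]
  exact sum_le_sum h

/-- Deleting `u` removes its weighted degree once from its own term and once from its
neighbours' terms. -/
lemma sum_wdeg_erase (hsymm : ∀ u v, w u v = w v u) {T : Finset (Fin n)} {u : Fin n}
    (hu : u ∈ T) :
    ∑ x ∈ T.erase u, wdeg w (T.erase u) x = ∑ x ∈ T, wdeg w T x - 2 * wdeg w T u := by
  have hdeg : ∀ x ∈ T.erase u, wdeg w (T.erase u) x = wdeg w T x - w u x := by
    intro x hx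
    rw [wdeg, wdeg, erase_right_comm,
      sum_erase_eq_sub (mem_erase.2 ⟨(ne_of_mem_erase hx).symm, hu⟩), hsymm x u]
  rw [sum_congr rfl hdeg, sum_sub_distrib, ← wdeg, sum_erase_eq_sub hu]
  ring

lemma wavg_le_two_mul_wdeg (hsymm : ∀ u v, w u v = w v u) {T : Finset (Fin n)} {u : Fin n}
    (hu : u ∈ T) (hT : (T.erase u).Nonempty → wavg w (T.erase u) ≤ wavg w T) :
    wavg w T ≤ 2 * wdeg w T u := by
  rcases (T.erase u).eq_empty_or_nonempty with hempty | hne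
  · obtain rfl : T = {u} := ((erase_eq_empty_iff T u).1 hempty).resolve_left (ne_empty_of_mem hu)
    simp [wavg, wdeg]
  have hle := hT hne
  have hk : (0 : ℝ) < (T.erase u).card := by exact_mod_cast hne.card_pos
  have hcard : (T.card : ℝ) = (T.erase u).card + 1 := by
    exact_mod_cast (card_erase_add_one hu).symm
  rw [wavg, wavg, sum_wdeg_erase hsymm hu, hcard] at hle
  rw [wavg, hcard]
  set k : ℝ := ((T.erase u).card : ℝ)
  set D := ∑ x ∈ T, wdeg w T x
  rw [one_div, one_div, inv_mul_eq_div, inv_mul_eq_div, div_le_div_iff₀ hk (by positivity)] at hle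
  rw [one_div, inv_mul_eq_div, div_le_iff₀ (by positivity)]
  nlinarith

lemma wavg_le_two_mul_wavg_of_wdeg_min (hsymm : ∀ u v, w u v = w v u)
    (hnonneg : ∀ u v, 0 ≤ w u v) {T S : Finset (Fin n)} {v : Fin n} (hTS : T ⊆ S) (hv : v ∈ T)
    (hmin : ∀ u ∈ S, wdeg w S v ≤ wdeg w S u)
    (hT : (T.erase v).Nonempty → wavg w (T.erase v) ≤ wavg w T) :
    wavg w T ≤ 2 * wavg w S := by
  have hdeg : ∀ u ∈ S, wavg w T / 2 ≤ wdeg w S u := fun u hu => by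
    linarith [wavg_le_two_mul_wdeg hsymm hv hT, wdeg_mono hnonneg hTS v, hmin u hu]
  linarith [le_wavg_of_forall_le_wdeg ⟨v, hTS hv⟩ hdeg]

end WeightedDensity

/-- Weighted-graph greedy peeling guarantee (Charikar-style): iteratively
removing a vertex of minimum weighted degree yields, for some set in the chain, a weighted
average density at least half of the optimum over all nonempty subsets. -/
theorem weighted_greedy_peeling_half_approx {n : ℕ} (hn : 0 < n)
    (w : Fin n → Fin n → ℝ)
    (hsymm : ∀ u v, w u v = w v u) (hnonneg : ∀ u v, 0 ≤ w u v)
    (S : ℕ → Finset (Fin n)) (v : ℕ → Fin n)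
    (h0 : S 0 = Finset.univ)
    (hstep : ∀ i < n - 1, v i ∈ S i ∧ S (i + 1) = S i \ {v i} ∧
      ∀ u ∈ S i, wdeg w (S i) (v i) ≤ wdeg w (S i) u) :
    ∃ i < n, (S i).Nonempty ∧
      ∀ S' : Finset (Fin n), S'.Nonempty → (1 / 2) * wavg w S' ≤ wavg w (S i) := by
  obtain ⟨T, hTne, hTmax⟩ := exists_max_image (univ.filter Finset.Nonempty) (wavg w)
    ⟨univ, mem_filter.2 ⟨mem_univ _, univ_nonempty_iff.2 ⟨⟨0, hn⟩⟩⟩⟩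
  replace hTne : T.Nonempty := (mem_filter.1 hTne).2
  have hopt : ∀ S' : Finset (Fin n), S'.Nonempty → wavg w S' ≤ wavg w T :=
    fun S' hS' => hTmax S' (mem_filter.2 ⟨mem_univ _, hS'⟩)
  rcases subset_or_exists_mem_of_erase_chain (fun i hi => (hstep i hi).2.1)
      (h0 ▸ subset_univ T) (n - 1) le_rfl with hlast | ⟨j, hj, hTj, hvj⟩
  · have hcard := card_eq_sub_of_erase_chain
      (fun i hi => ⟨(hstep i hi).1, (hstep i hi).2.1⟩) (n - 1) le_rfl
    rw [h0, card_univ, Fintype.card_fin] at hcard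
    have hT : T = S (n - 1) :=
      eq_of_subset_of_card_le hlast (by rw [hcard]; have := hTne.card_pos; omega)
    refine ⟨n - 1, by omega, hT ▸ hTne, fun S' hS' => ?_⟩
    rw [← hT]
    linarith [hopt S' hS', wavg_nonneg hnonneg S']
  · obtain ⟨hvS, -, hmin⟩ := hstep j (by omega)
    refine ⟨j, by omega, ⟨v j, hvS⟩, fun S' hS' => ?_⟩
    linarith [hopt S' hS', wavg_le_two_mul_wavg_of_wdeg_min hsymm hnonneg hTj hvj hmin
      (hopt _)]
end

section
/- For every integer b ≥ 1 and every even integer τ ≥ 2 there exists a graph history 𝒢 = (G_1, …, G_τ) on n = 2b+3 vertices such that: (1) every score_a peeling sequence S_0 = V, S_1, …, S_{n−1} satisfies max_{0 ≤ i ≤ n−1} f_am(S_i, 𝒢) ≤ 2; and (2) there exists a subset S* of 2b vertices with f_am(S*, 𝒢) = b. Consequently, the approximation ratio of the FindBFF_A algorithm for the BFF-am problem is O(1/n). (The instance: 2b vertices form a complete b×b bipartite graph in every snapshot; a vertex s is joined to all vertices in every snapshot except the last, where it is joined only to two extra vertices u and v; u and v are joined to each other in all snapshots; u is joined to all 2b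 bipartite vertices in the first τ/2 snapshots and v in the last τ/2 snapshots.) -/
open scoped Classical
open Finset

/-!
Under `score_a` peeling the hubs `u`, `v`, `s` survive as long as a vertex of `K_{b,b}` is left.
Each hub is joined to the other two in every snapshot and to everything in half of them, whereas a
vertex `w` on the larger remaining side of `K_{b,b}` sees at most half of the remaining bipartite
vertices plus two hubs, and one hub fewer in the last snapshot; summing over snapshots, `w` has
strictly smaller `score_a` than every hub. Hence every set of the chain either contains `u` and
`v`, and in each snapshot one of them is joined only to hubs, giving minimum degree at most `2`, or
has at most two vertices. Meanwhile `K_{b,b}` has minimum degree `b` in every snapshot.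
-/

section InducedDegree

variable {n : ℕ} {G : SimpleGraph (Fin n)} {S T : Finset (Fin n)} {x : Fin n}

lemma card_le_degIn (hTS : T ⊆ S) (hadj : ∀ y ∈ T, G.Adj x y) : #T ≤ degIn G S x :=
  card_le_card fun y hy => mem_filter.mpr ⟨hTS hy, hadj y hy⟩

lemma degIn_le_card (hadj : ∀ y ∈ S, G.Adj x y → y ∈ T) : degIn G S x ≤ #T :=
  card_le_card fun y hy => hadj y (mem_filter.mp hy).1 (mem_filter.mp hy).2

lemma degIn_le_card_sub_one (hx : x ∈ T) (hadj : ∀ y ∈ S, G.Adj x y → y ∈ T) :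
    degIn G S x ≤ #T - 1 := by
  rw [← card_erase_of_mem hx]
  exact degIn_le_card fun y hy hxy => mem_erase.mpr ⟨hxy.ne', hadj y hy hxy⟩

lemma degIn_eq_card_sub_one (hx : x ∈ S) (hadj : ∀ y ∈ S, y ≠ x → G.Adj x y) :
    degIn G S x = #S - 1 := by
  rw [← card_erase_of_mem hx, degIn]
  congr 1
  ext y
  simp only [mem_filter, mem_erase]
  exact ⟨fun ⟨hy, hxy⟩ => ⟨hxy.ne', hy⟩, fun ⟨hyx, hy⟩ => ⟨hy, hadj y hy hyx⟩⟩

lemma minDensity_le_degIn_s6 (hx : x ∈ S) : minDensity G S ≤ degIn G S x :=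
  Nat.sInf_le ⟨x, hx, rfl⟩

lemma minDensity_le_card_sub_one : minDensity G S ≤ #S - 1 := by
  rcases S.eq_empty_or_nonempty with rfl | ⟨x, hx⟩
  · simp [minDensity]
  · exact (minDensity_le_degIn_s6 hx).trans (degIn_le_card_sub_one hx fun y hy _ => hy)

lemma minDensity_eq_of_forall_degIn_eq {c : ℕ} (hS : S.Nonempty)
    (hdeg : ∀ x ∈ S, degIn G S x = c) : minDensity G S = c := by
  have hc : (fun x => degIn G S x) '' (S : Set (Fin n)) = {c} := by
    rw [Set.image_congr hdeg]
    exact (coe_nonempty.mpr hS).image_const c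
  rw [minDensity, hc, csInf_singleton]

end InducedDegree

section Aggregate

variable {n τ : ℕ} {G : Fin τ → SimpleGraph (Fin n)} {S : Finset (Fin n)}

lemma fam_le_of_forall_minDensity_le {c : ℕ} (h : ∀ t, minDensity (G t) S ≤ c) :
    fam G S ≤ c := by
  rcases Nat.eq_zero_or_pos τ with rfl | hτ
  · simp [fam]
  rw [fam, one_div, inv_mul_le_iff₀ (by positivity)]
  calc ∑ t, (minDensity (G t) S : ℝ) ≤ ∑ _t : Fin τ, (c : ℝ) :=
        sum_le_sum fun t _ => by exact_mod_cast h t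
    _ = τ * c := by simp

lemma fam_eq_of_forall_minDensity_eq {c : ℕ} (hτ : τ ≠ 0) (h : ∀ t, minDensity (G t) S = c) :
    fam G S = c := by
  simp only [fam, h, sum_const, card_univ, Fintype.card_fin, nsmul_eq_mul]
  field_simp

lemma scoreA_lt_scoreA_of_sum_lt {x y : Fin n}
    (h : ∑ t, degIn (G t) S x < ∑ t, degIn (G t) S y) : scoreA G S x < scoreA G S y := by
  have hτ : 0 < τ := Nat.pos_of_ne_zero <| by rintro rfl; simp at h
  exact mul_lt_mul_of_pos_left (by exact_mod_cast h) (by positivity)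

end Aggregate

lemma card_mul_add_card_compl_mul_le_sum {ι : Type*} [Fintype ι] [DecidableEq ι]
    {f : ι → ℕ} {H : Finset ι} {a c : ℕ} (ha : ∀ i ∈ H, a ≤ f i) (hc : ∀ i ∉ H, c ≤ f i) :
    #H * a + #Hᶜ * c ≤ ∑ i, f i := by
  rw [← sum_add_sum_compl H f]
  exact add_le_add (by simpa using card_nsmul_le_sum H f a ha)
    (by simpa using card_nsmul_le_sum Hᶜ f c fun i hi => hc i (mem_compl.mp hi))

namespace IsScoreAPeeling

variable {n τ : ℕ} {G : Fin τ → SimpleGraph (Fin n)} {S : ℕ → Finset (Fin n)} {v : ℕ → Fin n}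

lemma card_eq (hp : IsScoreAPeeling G S v) : ∀ i < n, #(S i) = n - i
  | 0, _ => by simp [hp.1]
  | i + 1, hi => by
    obtain ⟨hvi, hS, -⟩ := hp.2 i (by omega)
    rw [hS, card_sdiff_of_subset (singleton_subset_iff.mpr hvi), card_singleton,
      card_eq hp i (by omega)]
    omega

lemma subset_of_exists_scoreA_lt (hp : IsScoreAPeeling G S v) {P : Finset (Fin n)}
    (hP : ∀ T, P ⊂ T → ∃ w ∈ T, ∀ p ∈ P, scoreA G T w < scoreA G T p) :
    ∀ i ≤ n - #P, P ⊆ S i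
  | 0, _ => by simp [hp.1]
  | i + 1, hi => by
    rcases P.eq_empty_or_nonempty with rfl | hPne
    · exact empty_subset _
    have hPi := subset_of_exists_scoreA_lt hp hP i (by omega)
    have hcard : #P < #(S i) := by have := hPne.card_pos; rw [hp.card_eq i (by omega)]; omega
    obtain ⟨w, hw, hlt⟩ := hP (S i) (hPi.ssubset_of_ne fun h => hcard.ne (h ▸ rfl))
    obtain ⟨-, hS, hmin⟩ := hp.2 i (by have := hPne.card_pos; omega)
    rw [hS]
    intro p hpP
    refine mem_sdiff.mpr ⟨hPi hpP, fun hpv => ?_⟩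
    rw [mem_singleton] at hpv
    exact (hmin w hw).not_gt (hpv ▸ hlt p hpP)

end IsScoreAPeeling

namespace BadHistory

/-- Snapshot `t` of the instance. Vertices `i < b` and `b ≤ i < 2b` are the two sides of the
complete bipartite graph; `2b`, `2b + 1`, `2b + 2` are the paper's `u`, `v`, `s`. -/
def rel (b τ t x y : ℕ) : Prop :=
  (x < b ∧ b ≤ y ∧ y < 2 * b) ∨ (2 * b ≤ x ∧ 2 * b ≤ y) ∨ (x = 2 * b ∧ 2 * t < τ) ∨
    (x = 2 * b + 1 ∧ τ ≤ 2 * t) ∨ (x = 2 * b + 2 ∧ t + 1 < τ)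

def graph (b τ : ℕ) (t : Fin τ) : SimpleGraph (Fin (2 * b + 3)) :=
  SimpleGraph.fromRel fun x y => rel b τ t x y

def u (b : ℕ) : Fin (2 * b + 3) := ⟨2 * b, by omega⟩

def v (b : ℕ) : Fin (2 * b + 3) := ⟨2 * b + 1, by omega⟩

def s (b : ℕ) : Fin (2 * b + 3) := ⟨2 * b + 2, by omega⟩

def core (b : ℕ) : Finset (Fin (2 * b + 3)) := {x | x.val < 2 * b}

def hubs (b : ℕ) : Finset (Fin (2 * b + 3)) := (core b)ᶜ

def left (b : ℕ) : Finset (Fin (2 * b + 3)) := {x | x.val < b}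

def opp (b : ℕ) (w : Fin (2 * b + 3)) : Finset (Fin (2 * b + 3)) :=
  if w.val < b then core b \ left b else left b

def activeHub (b τ : ℕ) (t : Fin τ) : Fin (2 * b + 3) := if 2 * t.val < τ then u b else v b

def idleHub (b τ : ℕ) (t : Fin τ) : Fin (2 * b + 3) := if 2 * t.val < τ then v b else u b

variable {b τ : ℕ} {t : Fin τ} {S : Finset (Fin (2 * b + 3))} {w x y : Fin (2 * b + 3)}

lemma graph_adj : (graph b τ t).Adj x y ↔ x.val ≠ y.val ∧ (rel b τ t x y ∨ rel b τ t y x) := by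
  simp [graph, Fin.val_ne_iff]

@[simp] lemma mem_core : x ∈ core b ↔ x.val < 2 * b := by simp [core]

@[simp] lemma mem_hubs : x ∈ hubs b ↔ 2 * b ≤ x.val := by simp [hubs]

@[simp] lemma mem_left : x ∈ left b ↔ x.val < b := by simp [left]

lemma card_core : #(core b) = 2 * b := by
  simp [core, Fin.card_filter_val_lt]

lemma card_hubs : #(hubs b) = 3 := by
  rw [hubs, card_compl, Fintype.card_fin, card_core]
  omega

lemma left_subset_core : left b ⊆ core b := fun x hx => by simp at hx ⊢; omega

lemma card_opp : #(opp b w) = b := by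
  have hleft : #(left b) = b := by simp [left, Fin.card_filter_val_lt]; omega
  unfold opp
  split_ifs
  · rw [card_sdiff_of_subset left_subset_core, card_core, hleft]; omega
  · exact hleft

lemma opp_subset_core : opp b w ⊆ core b := by
  unfold opp
  split_ifs
  · exact sdiff_subset
  · exact left_subset_core

lemma adj_iff_mem_opp (hw : w ∈ core b) (hy : y ∈ core b) :
    (graph b τ t).Adj w y ↔ y ∈ opp b w := by
  simp only [mem_core] at hw hy
  unfold opp
  split_ifs <;> simp [graph_adj, rel] <;> omega

lemma adj_of_mem_hubs (hx : x ∈ hubs b) (hy : y ∈ hubs b) (hxy : x ≠ y) :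
    (graph b τ t).Adj x y := by
  simp only [mem_hubs] at hx hy
  rw [graph_adj]
  exact ⟨Fin.val_ne_iff.mpr hxy, Or.inl (Or.inr (Or.inl ⟨hx, hy⟩))⟩

lemma eq_activeHub_or_eq_s (hw : w ∈ core b) (hy : y ∈ hubs b) (h : (graph b τ t).Adj w y) :
    y = activeHub b τ t ∨ (y = s b ∧ t.val + 1 < τ) := by
  simp only [mem_core, mem_hubs, graph_adj, rel] at hw hy h
  unfold activeHub
  split_ifs <;> simp [Fin.ext_iff, u, v, s] <;> omega

lemma mem_hubs_of_adj_idleHub (h : (graph b τ t).Adj (idleHub b τ t) y) : y ∈ hubs b := by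
  unfold idleHub at h
  split_ifs at h <;> simp [graph_adj, rel, u, v] at h ⊢ <;> omega

lemma idleHub_mem_hubs : idleHub b τ t ∈ hubs b := by
  unfold idleHub; split_ifs <;> simp [u, v]

lemma exists_half_forall_adj (heven : Even τ) {p : Fin (2 * b + 3)} (hp : p ∈ hubs b) :
    ∃ H : Finset (Fin τ), #H = τ / 2 ∧ #Hᶜ = τ / 2 ∧
      ∀ t ∈ H, ∀ y ≠ p, (graph b τ t).Adj p y := by
  obtain ⟨h, rfl⟩ := heven
  have hfirst : #({t | t.val < h} : Finset (Fin (h + h))) = (h + h) / 2 := by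
    simp [Fin.card_filter_val_lt]; omega
  have hsecond : #({t | t.val < h} : Finset (Fin (h + h)))ᶜ = (h + h) / 2 := by
    rw [card_compl, hfirst, Fintype.card_fin]; omega
  have hadj : ∀ H : Finset (Fin (h + h)), (∀ t ∈ H, (t.val < h ↔ p.val ≠ 2 * b + 1)) →
      ∀ t ∈ H, ∀ y ≠ p, (graph b (h + h) t).Adj p y := by
    intro H hH t ht y hy
    have := hH t ht
    simp only [mem_hubs] at hp
    simp only [graph_adj, rel, ne_eq, ← Fin.val_ne_iff] at hy ⊢
    omega
  by_cases hpv : p.val = 2 * b + 1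
  · refine ⟨_, hsecond, by rw [compl_compl, hfirst], hadj _ fun t ht => ?_⟩
    simp only [mem_compl, mem_filter, mem_univ, true_and] at ht
    omega
  · refine ⟨_, hfirst, hsecond, hadj _ fun t ht => ?_⟩
    simp only [mem_filter, mem_univ, true_and] at ht
    omega

lemma mem_opp_or_eq_activeHub_or_eq_s (hw : w ∈ core b) (hy : y ∈ S) (h : (graph b τ t).Adj w y) :
    y ∈ S ∩ opp b w ∨ y = activeHub b τ t ∨ (y = s b ∧ t.val + 1 < τ) := by
  by_cases hyc : y ∈ core b
  · exact Or.inl (mem_inter.mpr ⟨hy, (adj_iff_mem_opp hw hyc).mp h⟩)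
  · exact Or.inr (eq_activeHub_or_eq_s hw (by simp at hyc ⊢; omega) h)

lemma degIn_le_card_inter_opp_add_two (hw : w ∈ core b) (t : Fin τ) :
    degIn (graph b τ t) S w ≤ #(S ∩ opp b w) + 2 := by
  refine (degIn_le_card (T := S ∩ opp b w ∪ {activeHub b τ t, s b}) fun y hy h => ?_).trans
    ((card_union_le _ _).trans (Nat.add_le_add_left card_le_two _))
  rcases mem_opp_or_eq_activeHub_or_eq_s hw hy h with hy | rfl | ⟨rfl, -⟩ <;> simp [hy]

lemma degIn_le_card_inter_opp_add_one (hw : w ∈ core b) (ht : t.val + 1 = τ) :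
    degIn (graph b τ t) S w ≤ #(S ∩ opp b w) + 1 := by
  refine (degIn_le_card (T := S ∩ opp b w ∪ {activeHub b τ t}) fun y hy h => ?_).trans
    ((card_union_le _ _).trans (Nat.add_le_add_left (card_singleton _).le _))
  rcases mem_opp_or_eq_activeHub_or_eq_s hw hy h with hy | rfl | ⟨-, ht'⟩
  · simp [hy]
  · simp
  · omega

lemma sum_degIn_lt_of_mem_core (hτ : 0 < τ) (hw : w ∈ core b) :
    ∑ t, degIn (graph b τ t) S w < τ * (#(S ∩ opp b w) + 2) := by
  calc ∑ t, degIn (graph b τ t) S w < ∑ _t : Fin τ, (#(S ∩ opp b w) + 2) :=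
        sum_lt_sum (fun t _ => degIn_le_card_inter_opp_add_two hw t)
          ⟨⟨τ - 1, by omega⟩, mem_univ _,
            (degIn_le_card_inter_opp_add_one hw (by simp only; omega)).trans_lt (by omega)⟩
    _ = τ * (#(S ∩ opp b w) + 2) := by simp

lemma minDensity_le_two (hS : hubs b ⊆ S) (t : Fin τ) : minDensity (graph b τ t) S ≤ 2 :=
  calc minDensity (graph b τ t) S ≤ degIn (graph b τ t) S (idleHub b τ t) :=
        minDensity_le_degIn_s6 (hS idleHub_mem_hubs)
    _ ≤ #(hubs b) - 1 :=
        degIn_le_card_sub_one idleHub_mem_hubs fun _ _ h => mem_hubs_of_adj_idleHub h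
    _ = 2 := by rw [card_hubs]

lemma two_le_degIn_of_mem_hubs (hS : hubs b ⊆ S) {p : Fin (2 * b + 3)} (hp : p ∈ hubs b) :
    2 ≤ degIn (graph b τ t) S p := by
  calc 2 = #((hubs b).erase p) := by rw [card_erase_of_mem hp, card_hubs]
    _ ≤ degIn (graph b τ t) S p := card_le_degIn ((erase_subset _ _).trans hS) fun y hy =>
        adj_of_mem_hubs hp (mem_of_mem_erase hy) (ne_of_mem_erase hy).symm

lemma card_eq_card_inter_core_add_three (hS : hubs b ⊆ S) : #S = #(S ∩ core b) + 3 := by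
  rw [← card_inter_add_card_sdiff S (core b), sdiff_eq_inter_compl, ← hubs,
    inter_eq_right.mpr hS, card_hubs]

lemma sum_degIn_ge_of_mem_hubs (heven : Even τ) (hS : hubs b ⊆ S) {p : Fin (2 * b + 3)}
    (hp : p ∈ hubs b) :
    τ / 2 * (#(S ∩ core b) + 2) + τ / 2 * 2 ≤ ∑ t, degIn (graph b τ t) S p := by
  obtain ⟨H, hH, hHc, hadj⟩ := exists_half_forall_adj heven hp
  have hsum := card_mul_add_card_compl_mul_le_sum (f := fun t => degIn (graph b τ t) S p)
    (H := H) (a := #(S ∩ core b) + 2) (fun t ht => ?_) fun t _ => two_le_degIn_of_mem_hubs hS hp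
  · rwa [hH, hHc] at hsum
  · rw [degIn_eq_card_sub_one (hS hp) fun y _ hy => hadj t ht y hy,
      card_eq_card_inter_core_add_three hS]
    omega

lemma exists_mem_core_two_mul_card_opp_le (hS : (S ∩ core b).Nonempty) :
    ∃ w ∈ S ∩ core b, 2 * #(S ∩ opp b w) ≤ #(S ∩ core b) := by
  have hsplit : #(S ∩ left b) + #(S ∩ (core b \ left b)) = #(S ∩ core b) := by
    rw [← card_inter_add_card_sdiff (S ∩ core b) (left b)]
    congr 2 <;> ext x <;> simp only [mem_inter, mem_sdiff, mem_core, mem_left] <;> grind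
  have hpos := hS.card_pos
  rcases le_total #(S ∩ (core b \ left b)) #(S ∩ left b) with hle | hle
  · obtain ⟨w, hw⟩ : (S ∩ left b).Nonempty := card_pos.mp (by omega)
    simp only [mem_inter, mem_left] at hw
    refine ⟨w, mem_inter.mpr ⟨hw.1, by simp; omega⟩, ?_⟩
    simp only [opp, hw.2, if_true]
    omega
  · obtain ⟨w, hw⟩ : (S ∩ (core b \ left b)).Nonempty := card_pos.mp (by omega)
    simp only [mem_inter, mem_sdiff, mem_core, mem_left] at hw
    refine ⟨w, mem_inter.mpr ⟨hw.1, by simp; omega⟩, ?_⟩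
    simp only [opp, hw.2.2, if_false]
    omega

lemma exists_scoreA_lt_of_hubs_ssubset (heven : Even τ) (hτ : 0 < τ) (hS : hubs b ⊂ S) :
    ∃ w ∈ S, ∀ p ∈ hubs b, scoreA (graph b τ) S w < scoreA (graph b τ) S p := by
  obtain ⟨x, hxS, hx⟩ := exists_of_ssubset hS
  obtain ⟨w, hw, hopp⟩ := exists_mem_core_two_mul_card_opp_le
    ⟨x, mem_inter.mpr ⟨hxS, by simpa [hubs] using hx⟩⟩
  obtain ⟨hwS, hwc⟩ := mem_inter.mp hw
  refine ⟨w, hwS, fun p hp => scoreA_lt_scoreA_of_sum_lt ?_⟩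
  have hhalf : τ / 2 * 2 = τ := Nat.div_two_mul_two_of_even heven
  calc ∑ t, degIn (graph b τ t) S w < τ * (#(S ∩ opp b w) + 2) :=
        sum_degIn_lt_of_mem_core hτ hwc
    _ ≤ τ / 2 * (#(S ∩ core b) + 2) + τ / 2 * 2 := by
        nlinarith [Nat.mul_le_mul_left (τ / 2) hopp]
    _ ≤ ∑ t, degIn (graph b τ t) S p := sum_degIn_ge_of_mem_hubs heven hS.subset hp

lemma minDensity_core (t : Fin τ) : minDensity (graph b τ t) (core b) = b := by
  rcases (core b).eq_empty_or_nonempty with he | hne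
  · have hb : b = 0 := by have := card_core (b := b); rw [he, card_empty] at this; omega
    simp [minDensity, he, hb]
  refine minDensity_eq_of_forall_degIn_eq hne fun w hw => ?_
  calc degIn (graph b τ t) (core b) w = #(opp b w) := congrArg card ?_
    _ = b := card_opp
  ext y
  simp only [mem_filter]
  exact ⟨fun ⟨hy, h⟩ => (adj_iff_mem_opp hw hy).mp h,
    fun hy => ⟨opp_subset_core hy, (adj_iff_mem_opp hw (opp_subset_core hy)).mpr hy⟩⟩

lemma fam_core (hτ : τ ≠ 0) : fam (graph b τ) (core b) = b :=
  fam_eq_of_forall_minDensity_eq hτ minDensity_core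

end BadHistory

theorem findBffA_bad_for_bff_am_general (b τ : ℕ) (hτ : 2 ≤ τ) (heven : Even τ) :
    ∃ G : Fin τ → SimpleGraph (Fin (2 * b + 3)),
      (∀ (S : ℕ → Finset (Fin (2 * b + 3))) (v : ℕ → Fin (2 * b + 3)),
        IsScoreAPeeling G S v → ∀ i < 2 * b + 3, fam G (S i) ≤ 2) ∧
      ∃ Sstar : Finset (Fin (2 * b + 3)), Sstar.card = 2 * b ∧ fam G Sstar = (b : ℝ) := by
  refine ⟨BadHistory.graph b τ, fun S v hp i hi => ?_, BadHistory.core b, BadHistory.card_core,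
    BadHistory.fam_core (by omega)⟩
  have hhubs := hp.subset_of_exists_scoreA_lt fun T hT =>
    BadHistory.exists_scoreA_lt_of_hubs_ssubset heven (by omega) hT
  have hmin : ∀ t, minDensity (BadHistory.graph b τ t) (S i) ≤ 2 := by
    intro t
    rcases le_or_gt i (2 * b) with hib | hib
    · exact BadHistory.minDensity_le_two (hhubs i (by rw [BadHistory.card_hubs]; omega)) t
    · exact minDensity_le_card_sub_one.trans (by rw [hp.card_eq i hi]; omega)
  exact_mod_cast fam_le_of_forall_minDensity_le hmin

/-- For all `b ≥ 1` and even `τ ≥ 2` there is a graph history on `n = 2b+3`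
vertices on which every `score_a` peeling chain only contains sets of `f_am`-value at most `2`,
while some set of `2b` vertices has `f_am`-value `b`; hence `FindBFF_A` has approximation ratio
`O(1/n)` for the BFF-am problem. -/
theorem findBffA_bad_for_bff_am (b τ : ℕ) (hb : 1 ≤ b) (hτ : 2 ≤ τ) (heven : Even τ) :
    ∃ G : Fin τ → SimpleGraph (Fin (2 * b + 3)),
      (∀ (S : ℕ → Finset (Fin (2 * b + 3))) (v : ℕ → Fin (2 * b + 3)),
        IsScoreAPeeling G S v → ∀ i < 2 * b + 3, fam G (S i) ≤ 2) ∧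
      ∃ Sstar : Finset (Fin (2 * b + 3)), Sstar.card = 2 * b ∧ fam G Sstar = (b : ℝ) :=
  findBffA_bad_for_bff_am_general b τ hτ heven
end

section
/- For every integer m ≥ 3 there exists a graph history 𝒢 = (G_1, …, G_m) with τ = m snapshots on n = m² + m vertices such that: (1) every score_m peeling sequence S_0 = V, S_1, …, S_{n−1} satisfies max_{0 ≤ i ≤ n−1} f_ma(S_i, 𝒢) ≤ 3; and (2) there exists a subset S* of m vertices with f_ma(S*, 𝒢) = (m−1)(m−2)/m. Consequently, the approximation ratio of the FindBFF_M algorithm for the BFF-ma problem is O(1/√n). (The instance: a set B of m² vertices forms a cycle in every snapshot; a set A of m vertices is such that in snapshot G_t all vertices of A except one designated vertex v_t, different for each snapshot, form a clique, while v_t is isolated.) -/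
open scoped Classical
open Finset

lemma degIn_eq_sum {n : ℕ} (G : SimpleGraph (Fin n)) (S : Finset (Fin n)) (u : Fin n) :
    degIn G S u = ∑ v ∈ S, if G.Adj u v then 1 else 0 := by
  rw [degIn, Finset.card_filter]

lemma handshake {n : ℕ} (G : SimpleGraph (Fin n)) (S : Finset (Fin n)) :
    2 * edgesIn G S = ∑ u ∈ S, degIn G S u := by
  have h1 : edgesIn G S = ∑ u ∈ S, ∑ v ∈ S, if u < v ∧ G.Adj u v then 1 else 0 := by
    rw [edgesIn, Finset.card_filter, Finset.sum_product]
  have hswap : ∑ u ∈ S, ∑ v ∈ S, (if v < u ∧ G.Adj u v then (1:ℕ) else 0)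
      = ∑ u ∈ S, ∑ v ∈ S, (if u < v ∧ G.Adj u v then 1 else 0) := by
    rw [Finset.sum_comm]
    refine Finset.sum_congr rfl fun u _ => Finset.sum_congr rfl fun v _ => ?_
    refine if_congr ?_ rfl rfl
    exact and_congr_right fun _ => G.adj_comm _ _
  have h2 : ∑ u ∈ S, degIn G S u
      = (∑ u ∈ S, ∑ v ∈ S, if u < v ∧ G.Adj u v then 1 else 0)
        + ∑ u ∈ S, ∑ v ∈ S, (if v < u ∧ G.Adj u v then (1:ℕ) else 0) := by
    rw [← Finset.sum_add_distrib]
    refine Finset.sum_congr rfl fun u _ => ?_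
    rw [degIn_eq_sum, ← Finset.sum_add_distrib]
    refine Finset.sum_congr rfl fun v _ => ?_
    by_cases ha : G.Adj u v
    · have hne : u ≠ v := G.ne_of_adj ha
      rcases hne.lt_or_gt with h | h
      · simp [ha, h, not_lt.mpr h.le]
      · simp [ha, h, not_lt.mpr h.le]
    · simp [ha]
  rw [h2, hswap, ← h1, two_mul]

/-- The instance graph: `A = {x | x < m}` minus the vertex with value `t` forms a clique,
`B = {x | m ≤ x}` carries a fixed cycle. -/
def Gr (m : ℕ) (t : Fin m) : SimpleGraph (Fin (m ^ 2 + m)) :=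
  SimpleGraph.fromRel (fun u v =>
    (u.val < m ∧ v.val < m ∧ u.val ≠ t.val ∧ v.val ≠ t.val) ∨
    (m ≤ u.val ∧ m ≤ v.val ∧ (u.val - m + 1) % m ^ 2 + m = v.val))

lemma gr_adj {m : ℕ} (t : Fin m) (u v : Fin (m ^ 2 + m)) :
    (Gr m t).Adj u v ↔ u ≠ v ∧
      (((u.val < m ∧ v.val < m ∧ u.val ≠ t.val ∧ v.val ≠ t.val) ∨
        (m ≤ u.val ∧ m ≤ v.val ∧ (u.val - m + 1) % m ^ 2 + m = v.val)) ∨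
       ((v.val < m ∧ u.val < m ∧ v.val ≠ t.val ∧ u.val ≠ t.val) ∨
        (m ≤ v.val ∧ m ≤ u.val ∧ (v.val - m + 1) % m ^ 2 + m = u.val))) := by
  rw [Gr, SimpleGraph.fromRel_adj]

/-- Neighbors of an `A`-vertex. -/
lemma adjA {m : ℕ} {t : Fin m} {u v : Fin (m ^ 2 + m)} (hu : u.val < m)
    (h : (Gr m t).Adj u v) : v.val < m ∧ u.val ≠ t.val ∧ v.val ≠ t.val := by
  rw [gr_adj] at h
  obtain ⟨hne, h | h⟩ := h
  · rcases h with ⟨h1, h2, h3, h4⟩ | ⟨h1, _, _⟩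
    · exact ⟨h2, h3, h4⟩
    · omega
  · rcases h with ⟨h1, h2, h3, h4⟩ | ⟨h1, h2, h3⟩
    · exact ⟨h1, h4, h3⟩
    · exact absurd hu (not_lt.mpr (h3 ▸ Nat.le_add_left m _))

lemma adjA' {m : ℕ} {t : Fin m} {u v : Fin (m ^ 2 + m)} (hu : u.val < m) (hv : v.val < m)
    (hne : u ≠ v) (hut : u.val ≠ t.val) (hvt : v.val ≠ t.val) : (Gr m t).Adj u v := by
  rw [gr_adj]
  exact ⟨hne, Or.inl (Or.inl ⟨hu, hv, hut, hvt⟩)⟩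

/-- `A`-vertices have induced degree at most `m`. -/
lemma degA_le {m : ℕ} (t : Fin m) (S : Finset (Fin (m ^ 2 + m))) {u : Fin (m ^ 2 + m)}
    (hu : u.val < m) : degIn (Gr m t) S u ≤ m := by
  rw [degIn]
  calc (S.filter fun v => (Gr m t).Adj u v).card
      ≤ (Finset.range m).card := by
        refine Finset.card_le_card_of_injOn Fin.val (fun v hv => ?_)
          (fun a _ b _ h => Fin.val_injective h)
        rw [Finset.coe_range, Set.mem_Iio]
        exact (adjA hu (Finset.mem_filter.mp hv).2).1
    _ = m := Finset.card_range m

/-- The vertex with `t`'s value is isolated in `Gr m t`. -/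
lemma degA_isolated {m : ℕ} {t : Fin m} (S : Finset (Fin (m ^ 2 + m))) {u : Fin (m ^ 2 + m)}
    (hu : u.val < m) (hut : u.val = t.val) : degIn (Gr m t) S u = 0 := by
  rw [degIn, Finset.card_eq_zero, Finset.filter_eq_empty_iff]
  intro v _ hadj
  exact (adjA hu hadj).2.1 hut

/-- `B`-vertices have induced degree at most 2. -/
lemma degB_le_two {m : ℕ} (hm : 3 ≤ m) (t : Fin m) (S : Finset (Fin (m ^ 2 + m)))
    {u : Fin (m ^ 2 + m)} (hu : m ≤ u.val) : degIn (Gr m t) S u ≤ 2 := by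
  have hm2 : 2 ≤ m ^ 2 := by nlinarith
  have hmod1 : (u.val - m + 1) % m ^ 2 < m ^ 2 := Nat.mod_lt _ (by omega)
  have hmod2 : (u.val - m + m ^ 2 - 1) % m ^ 2 < m ^ 2 := Nat.mod_lt _ (by omega)
  set w1 : Fin (m ^ 2 + m) := ⟨(u.val - m + 1) % m ^ 2 + m, by omega⟩ with hw1
  set w2 : Fin (m ^ 2 + m) := ⟨(u.val - m + m ^ 2 - 1) % m ^ 2 + m, by omega⟩ with hw2
  have hsub : S.filter (fun v => (Gr m t).Adj u v) ⊆ {w1, w2} := by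
    intro v hv
    have hadj := (Finset.mem_filter.mp hv).2
    rw [gr_adj] at hadj
    obtain ⟨hne, h | h⟩ := hadj
    · rcases h with ⟨h1, _⟩ | ⟨h1, h2, h3⟩
      · omega
      · have : v = w1 := Fin.val_injective h3.symm
        simp [this]
    · rcases h with ⟨h1, h2, _⟩ | ⟨h1, h2, h3⟩
      · omega
      · have hslt : v.val - m < m ^ 2 := by have := v.isLt; omega
        have hmodeq : (v.val - m + 1) % m ^ 2 = u.val - m := by omega
        have hval : v.val - m = (u.val - m + m ^ 2 - 1) % m ^ 2 := by
          by_cases hcase : v.val - m + 1 < m ^ 2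
          · have h5 : u.val - m = v.val - m + 1 := by rw [← hmodeq, Nat.mod_eq_of_lt hcase]
            rw [h5]
            have he : v.val - m + 1 + m ^ 2 - 1 = v.val - m + m ^ 2 := by omega
            rw [he, Nat.add_mod_right, Nat.mod_eq_of_lt hslt]
          · have hseq : v.val - m + 1 = m ^ 2 := by omega
            have h5 : u.val - m = 0 := by rw [← hmodeq, hseq, Nat.mod_self]
            rw [h5]
            have he : 0 + m ^ 2 - 1 = v.val - m := by omega
            rw [he, Nat.mod_eq_of_lt hslt]
        have : v = w2 := Fin.val_injective
          (show v.val = (u.val - m + m ^ 2 - 1) % m ^ 2 + m by omega)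
        simp [this]
  calc (S.filter fun v => (Gr m t).Adj u v).card ≤ ({w1, w2} : Finset _).card :=
        Finset.card_le_card hsub
    _ ≤ 2 := Finset.card_insert_le w1 {w2} |>.trans (by simp)

/-- `B`-vertices keep degree at least 1 while all of `B` is present. -/
lemma degB_ge_one {m : ℕ} (hm : 3 ≤ m) (t : Fin m) {S : Finset (Fin (m ^ 2 + m))}
    (hB : ∀ x : Fin (m ^ 2 + m), m ≤ x.val → x ∈ S)
    {u : Fin (m ^ 2 + m)} (hu : m ≤ u.val) : 1 ≤ degIn (Gr m t) S u := by
  have hm2 : 2 ≤ m ^ 2 := by nlinarith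
  have hr : u.val - m < m ^ 2 := by have := u.isLt; omega
  have hmod1 : (u.val - m + 1) % m ^ 2 < m ^ 2 := Nat.mod_lt _ (by omega)
  set w1 : Fin (m ^ 2 + m) := ⟨(u.val - m + 1) % m ^ 2 + m, by omega⟩ with hw1
  have hne : u ≠ w1 := by
    intro h
    have hv : u.val = (u.val - m + 1) % m ^ 2 + m := congrArg Fin.val h
    by_cases hc : u.val - m + 1 < m ^ 2
    · rw [Nat.mod_eq_of_lt hc] at hv; omega
    · have hs : u.val - m + 1 = m ^ 2 := by omega
      rw [hs, Nat.mod_self] at hv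
      omega
  have hadj : (Gr m t).Adj u w1 := by
    rw [gr_adj]
    exact ⟨hne, Or.inl (Or.inr ⟨hu, Nat.le_add_left m _, rfl⟩)⟩
  rw [degIn, Nat.succ_le_iff, Finset.card_pos]
  exact ⟨w1, Finset.mem_filter.mpr ⟨hB w1 (Nat.le_add_left m _), hadj⟩⟩

-- number of A-vertices
lemma cardA (m : ℕ) :
    (Finset.univ.filter (fun x : Fin (m ^ 2 + m) => x.val < m)).card = m := by
  have h : (Finset.univ.filter (fun x : Fin (m ^ 2 + m) => x.val < m)).card
      = (Finset.range m).card := by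
    apply Finset.card_bij (fun (x : Fin (m ^ 2 + m)) _ => x.val)
    · intro a ha
      rw [Finset.mem_range]
      exact (Finset.mem_filter.mp ha).2
    · intro a _ b _ h
      exact Fin.val_injective h
    · intro r hr
      rw [Finset.mem_range] at hr
      have hle : m ≤ m ^ 2 := Nat.le_self_pow two_ne_zero m
      exact ⟨⟨r, by omega⟩, Finset.mem_filter.mpr ⟨Finset.mem_univ _, hr⟩, rfl⟩
  simpa using h

lemma cardB (m : ℕ) :
    m ^ 2 ≤ (Finset.univ.filter (fun x : Fin (m ^ 2 + m) => ¬ x.val < m)).card := by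
  have h := Finset.card_filter_add_card_filter_not
    (s := (Finset.univ : Finset (Fin (m ^ 2 + m)))) (p := fun x => x.val < m)
  rw [cardA m] at h
  have : (Finset.univ : Finset (Fin (m ^ 2 + m))).card = m ^ 2 + m := by
    simp [Finset.card_univ]
  omega

lemma sum_deg_le {m : ℕ} (hm : 3 ≤ m) (t : Fin m) (S : Finset (Fin (m ^ 2 + m)))
    (hS : (∀ x : Fin (m ^ 2 + m), m ≤ x.val → x ∈ S) ∨ (∀ x ∈ S, m ≤ x.val)) :
    ∑ u ∈ S, degIn (Gr m t) S u ≤ 3 * S.card := by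
  rcases hS with hB | hB
  · -- B ⊆ S
    have hsplit := (Finset.sum_filter_add_sum_filter_not S (fun x => x.val < m)
      (fun u => degIn (Gr m t) S u)).symm
    set SA := S.filter (fun x => x.val < m) with hSA
    set SB := S.filter (fun x => ¬ x.val < m) with hSB
    have hcards : SA.card + SB.card = S.card :=
      Finset.card_filter_add_card_filter_not _
    have hA : ∑ u ∈ SA, degIn (Gr m t) S u ≤ m * SA.card := by
      calc ∑ u ∈ SA, degIn (Gr m t) S u ≤ ∑ _u ∈ SA, m :=
            Finset.sum_le_sum fun u hu => degA_le t S (Finset.mem_filter.mp hu).2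
        _ = m * SA.card := by rw [Finset.sum_const, smul_eq_mul, mul_comm]
    have hBB : ∑ u ∈ SB, degIn (Gr m t) S u ≤ 2 * SB.card := by
      calc ∑ u ∈ SB, degIn (Gr m t) S u ≤ ∑ _u ∈ SB, 2 :=
            Finset.sum_le_sum fun u hu => degB_le_two hm t S
              (by have := (Finset.mem_filter.mp hu).2; omega)
        _ = 2 * SB.card := by rw [Finset.sum_const, smul_eq_mul, mul_comm]
    have hSAle : SA.card ≤ m := by
      refine le_trans (Finset.card_le_card ?_) (le_of_eq (cardA m))
      intro x hx
      exact Finset.mem_filter.mpr ⟨Finset.mem_univ _, (Finset.mem_filter.mp hx).2⟩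
    have hSBge : m ^ 2 ≤ SB.card := by
      refine le_trans (cardB m) (Finset.card_le_card ?_)
      intro x hx
      have hx2 := (Finset.mem_filter.mp hx).2
      exact Finset.mem_filter.mpr ⟨hB x (by omega), hx2⟩
    have hkey : m * SA.card ≤ SB.card := by
      calc m * SA.card ≤ m * m := Nat.mul_le_mul_left m hSAle
        _ = m ^ 2 := (sq m).symm
        _ ≤ SB.card := hSBge
    calc ∑ u ∈ S, degIn (Gr m t) S u
        = (∑ u ∈ SA, degIn (Gr m t) S u) + ∑ u ∈ SB, degIn (Gr m t) S u := hsplit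
      _ ≤ m * SA.card + 2 * SB.card := Nat.add_le_add hA hBB
      _ ≤ SB.card + 2 * SB.card := Nat.add_le_add_right hkey _
      _ = 3 * SB.card := by ring
      _ ≤ 3 * S.card := Nat.mul_le_mul_left 3 (by omega)
  · -- S ⊆ B
    calc ∑ u ∈ S, degIn (Gr m t) S u ≤ ∑ _u ∈ S, 2 :=
          Finset.sum_le_sum fun u hu => degB_le_two hm t S (hB u hu)
      _ = 2 * S.card := by rw [Finset.sum_const, smul_eq_mul, mul_comm]
      _ ≤ 3 * S.card := Nat.mul_le_mul_right _ (by omega)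

lemma avg_le_three {m : ℕ} (hm : 3 ≤ m) (t : Fin m) (S : Finset (Fin (m ^ 2 + m)))
    (hS : (∀ x : Fin (m ^ 2 + m), m ≤ x.val → x ∈ S) ∨ (∀ x ∈ S, m ≤ x.val)) :
    avgDensity (Gr m t) S ≤ 3 := by
  rw [avgDensity]
  rcases Nat.eq_zero_or_pos S.card with h | h
  · rw [h]
    norm_num
  · rw [div_le_iff₀ (by exact_mod_cast h)]
    have h1 : 2 * edgesIn (Gr m t) S ≤ 3 * S.card := by
      rw [handshake]
      exact sum_deg_le hm t S hS
    exact_mod_cast h1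

lemma fma_le_avg {n τ : ℕ} (G : Fin τ → SimpleGraph (Fin n)) (S : Finset (Fin n)) (t : Fin τ) :
    fma G S ≤ avgDensity (G t) S := by
  apply csInf_le
  · refine ⟨0, fun x hx => ?_⟩
    obtain ⟨s, rfl⟩ := hx
    simp only [avgDensity]
    positivity
  · exact ⟨t, rfl⟩

lemma scoreM_zero {m : ℕ} (S : Finset (Fin (m ^ 2 + m))) {u : Fin (m ^ 2 + m)}
    (hu : u.val < m) : scoreM (Gr m) S u = 0 := by
  rw [scoreM, Nat.sInf_eq_zero]
  exact Or.inl ⟨⟨u.val, hu⟩, degA_isolated S hu rfl⟩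

lemma invariant {m : ℕ} (hm : 3 ≤ m) (S : ℕ → Finset (Fin (m ^ 2 + m)))
    (v : ℕ → Fin (m ^ 2 + m)) (hp : IsScoreMPeeling (Gr m) S v) :
    ∀ i < m ^ 2 + m,
      (∀ x : Fin (m ^ 2 + m), m ≤ x.val → x ∈ S i) ∨ (∀ x ∈ S i, m ≤ x.val) := by
  haveI : Nonempty (Fin m) := ⟨⟨0, by omega⟩⟩
  intro i hi
  induction i with
  | zero =>
    left
    intro x _
    rw [hp.1]
    exact Finset.mem_univ x
  | succ k ih =>
    have hk : k < m ^ 2 + m := by omega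
    have hQ := ih hk
    obtain ⟨hv_mem, hSsucc, hmin⟩ := hp.2 k (by omega)
    rcases hQ with hB | hB
    · by_cases hA : ∃ a ∈ S k, a.val < m
      · obtain ⟨a, haS, haA⟩ := hA
        have hs0 : scoreM (Gr m) (S k) a = 0 := scoreM_zero (S k) haA
        have hv0 : scoreM (Gr m) (S k) (v k) = 0 :=
          Nat.le_zero.mp (hs0 ▸ hmin a haS)
        have hvA : (v k).val < m := by
          by_contra hge
          push_neg at hge
          rw [scoreM] at hv0
          obtain ⟨t, ht⟩ := (Nat.sInf_eq_zero.mp hv0).resolve_right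
            (Set.Nonempty.ne_empty (Set.range_nonempty _))
          have h1 := degB_ge_one hm t hB hge
          have ht' : degIn (Gr m t) (S k) (v k) = 0 := ht
          omega
        left
        intro x hx
        rw [hSsucc, Finset.mem_sdiff]
        refine ⟨hB x hx, ?_⟩
        rw [Finset.mem_singleton]
        intro h
        rw [h] at hx
        omega
      · right
        push_neg at hA
        intro x hx
        rw [hSsucc, Finset.mem_sdiff] at hx
        have := hA x hx.1
        omega
    · right
      intro x hx
      rw [hSsucc, Finset.mem_sdiff] at hx
      exact hB x hx.1


/-- The set `A`. -/
noncomputable def Aset (m : ℕ) : Finset (Fin (m ^ 2 + m)) :=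
  Finset.univ.filter (fun x => x.val < m)

lemma sum_degA {m : ℕ} (hm : 3 ≤ m) (t : Fin m) :
    ∑ u ∈ Aset m, degIn (Gr m t) (Aset m) u = (m - 1) * (m - 2) := by
  have hle : m ≤ m ^ 2 := Nat.le_self_pow two_ne_zero m
  set at' : Fin (m ^ 2 + m) := ⟨t.val, by have := t.isLt; omega⟩ with hat
  have hat_mem : at' ∈ Aset m := by
    rw [Aset, Finset.mem_filter]
    exact ⟨Finset.mem_univ _, t.isLt⟩
  have hdeg : ∀ u ∈ Aset m, degIn (Gr m t) (Aset m) u = if u = at' then 0 else m - 2 := by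
    intro u hu
    have huA : u.val < m := (Finset.mem_filter.mp hu).2
    by_cases hcase : u = at'
    · rw [if_pos hcase]
      exact degA_isolated _ huA (by rw [hcase])
    · rw [if_neg hcase]
      have hut : u.val ≠ t.val := fun h => hcase (Fin.val_injective h)
      have hfil : (Aset m).filter (fun w => (Gr m t).Adj u w) = Aset m \ {u, at'} := by
        ext w
        simp only [Finset.mem_filter, Finset.mem_sdiff, Finset.mem_insert,
          Finset.mem_singleton]
        constructor
        · rintro ⟨hw, hadj⟩
          obtain ⟨hwA, _, hwt⟩ := adjA huA hadj
          refine ⟨hw, ?_⟩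
          rintro (h | h)
          · exact (Gr m t).ne_of_adj hadj h.symm
          · exact hwt (by rw [h])
        · rintro ⟨hw, hne⟩
          push_neg at hne
          have hwA : w.val < m := (Finset.mem_filter.mp hw).2
          have hwt : w.val ≠ t.val := fun h => hne.2 (Fin.val_injective h)
          exact ⟨hw, adjA' huA hwA (fun h => hne.1 h.symm) hut hwt⟩
      rw [degIn, hfil, Finset.card_sdiff_of_subset]
      · rw [show (Aset m).card = m from cardA m]
        congr 1
        rw [Finset.card_insert_of_notMem, Finset.card_singleton]
        rw [Finset.mem_singleton]
        exact hcase
      · intro x hx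
        rw [Finset.mem_insert, Finset.mem_singleton] at hx
        rcases hx with rfl | rfl
        · exact hu
        · exact hat_mem
  calc ∑ u ∈ Aset m, degIn (Gr m t) (Aset m) u
      = ∑ u ∈ Aset m, (if u = at' then 0 else m - 2) :=
        Finset.sum_congr rfl hdeg
    _ = (if at' = at' then 0 else m - 2) + ∑ u ∈ (Aset m).erase at',
          (if u = at' then 0 else m - 2) := (Finset.add_sum_erase _ _ hat_mem).symm
    _ = ∑ u ∈ (Aset m).erase at', (m - 2) := by
        rw [if_pos rfl, zero_add]
        exact Finset.sum_congr rfl fun u hu => if_neg (Finset.ne_of_mem_erase hu)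
    _ = (m - 1) * (m - 2) := by
        rw [Finset.sum_const, smul_eq_mul, Finset.card_erase_of_mem hat_mem]
        rw [show ((Aset m).card) = m from cardA m]

lemma fma_Aset {m : ℕ} (hm : 3 ≤ m) :
    fma (Gr m) (Aset m) = ((m : ℝ) - 1) * ((m : ℝ) - 2) / (m : ℝ) := by
  haveI : Nonempty (Fin m) := ⟨⟨0, by omega⟩⟩
  have havg : ∀ t : Fin m,
      avgDensity (Gr m t) (Aset m) = ((m : ℝ) - 1) * ((m : ℝ) - 2) / (m : ℝ) := by
    intro t
    have h2e : 2 * edgesIn (Gr m t) (Aset m) = (m - 1) * (m - 2) := by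
      rw [handshake]
      exact sum_degA hm t
    have hcast : (2 : ℝ) * (edgesIn (Gr m t) (Aset m) : ℝ)
        = ((m : ℝ) - 1) * ((m : ℝ) - 2) := by
      have := congrArg (fun k : ℕ => (k : ℝ)) h2e
      push_cast [Nat.cast_sub (show 1 ≤ m by omega), Nat.cast_sub (show 2 ≤ m by omega)]
        at this
      linarith [this]
    rw [avgDensity, hcast, show ((Aset m).card) = m from cardA m]
  rw [fma]
  have : (Set.range fun t : Fin m => avgDensity (Gr m t) (Aset m))
      = {((m : ℝ) - 1) * ((m : ℝ) - 2) / (m : ℝ)} := by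
    rw [show (fun t : Fin m => avgDensity (Gr m t) (Aset m))
        = fun _ => ((m : ℝ) - 1) * ((m : ℝ) - 2) / (m : ℝ) from funext havg]
    exact Set.range_const
  rw [this, csInf_singleton]

/-- For every `m ≥ 3` there is a graph history with `τ = m` snapshots on
`n = m² + m` vertices on which every `score_m` peeling chain only contains sets of
`f_ma`-value at most `3`, while some set of `m` vertices has `f_ma`-value `(m-1)(m-2)/m`;
hence `FindBFF_M` has approximation ratio `O(1/√n)` for the BFF-ma problem. -/
theorem findBffM_bad_for_bff_ma (m : ℕ) (hm : 3 ≤ m) :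
    ∃ G : Fin m → SimpleGraph (Fin (m ^ 2 + m)),
      (∀ (S : ℕ → Finset (Fin (m ^ 2 + m))) (v : ℕ → Fin (m ^ 2 + m)),
        IsScoreMPeeling G S v → ∀ i < m ^ 2 + m, fma G (S i) ≤ 3) ∧
      ∃ Sstar : Finset (Fin (m ^ 2 + m)), Sstar.card = m ∧
        fma G Sstar = ((m : ℝ) - 1) * ((m : ℝ) - 2) / (m : ℝ) := by
  refine ⟨Gr m, ?_, ?_⟩
  · intro S v hp i hi
    exact (fma_le_avg (Gr m) (S i) ⟨0, by omega⟩).trans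
      (avg_le_three hm ⟨0, by omega⟩ (S i) (invariant hm S v hp i hi))
  · exact ⟨Aset m, cardA m, fma_Aset hm⟩
end

section
/- For every integer m ≥ 3 there exists a graph history 𝒢 = (G_1, …, G_m) with τ = m snapshots on n = m² + m vertices such that: (1) every score_a peeling sequence S_0 = V, S_1, …, S_{n−1} satisfies max_{0 ≤ i ≤ n−1} f_ma(S_i, 𝒢) ≤ 1; and (2) there exists a subset S* of m vertices with f_ma(S*, 𝒢) = m−1. Consequently, the approximation ratio of the FindBFF_A algorithm for the BFF-ma problem is O(1/√n). (The instance: a set A of m vertices forms a clique in every snapshot; a set B of m² vertices forms a clique in the first m−1 snapshots and is completely disconnected in the last snapshot; there are no edges between A and B.) -/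
open scoped Classical
open Finset

-- ### auxiliary

lemma pairCount {α : Type*} [LinearOrder α] [DecidableEq α] (s : Finset α) :
    ((s ×ˢ s).filter fun p => p.1 < p.2).card * 2 = s.card * (s.card - 1) := by
  have h1 : ((s ×ˢ s).filter fun p => p.1 < p.2).card
      = ((s ×ˢ s).filter fun p => p.2 < p.1).card := by
    apply Finset.card_bij (fun p _ => (p.2, p.1))
    · intro p hp; simp only [Finset.mem_filter, Finset.mem_product] at *; tauto
    · intro p hp q hq h; simp only [Prod.ext_iff] at h ⊢; tauto
    · intro p hp
      refine ⟨(p.2, p.1), ?_, rfl⟩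
      simp only [Finset.mem_filter, Finset.mem_product] at *; tauto
  have h2 : ((s ×ˢ s).filter fun p => p.1 < p.2) ∪ ((s ×ˢ s).filter fun p => p.2 < p.1)
      = s.offDiag := by
    ext p
    simp only [Finset.mem_union, Finset.mem_filter, Finset.mem_offDiag, Finset.mem_product]
    constructor
    · rintro (⟨⟨h1,h2⟩,h3⟩|⟨⟨h1,h2⟩,h3⟩)
      · exact ⟨h1, h2, ne_of_lt h3⟩
      · exact ⟨h1, h2, (ne_of_lt h3).symm⟩
    · rintro ⟨h1, h2, h3⟩
      rcases lt_or_gt_of_ne h3 with h|h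
      · exact Or.inl ⟨⟨h1,h2⟩,h⟩
      · exact Or.inr ⟨⟨h1,h2⟩,h⟩
  have hd : Disjoint ((s ×ˢ s).filter fun p => p.1 < p.2) ((s ×ˢ s).filter fun p => p.2 < p.1) := by
    rw [Finset.disjoint_left]
    intro p hp hq
    simp only [Finset.mem_filter] at hp hq
    exact absurd hq.2 (not_lt.mpr hp.2.le)
  have := Finset.card_union_of_disjoint hd
  rw [h2, Finset.offDiag_card] at this
  have e : s.card * (s.card - 1) = s.card * s.card - s.card := by
    rw [Nat.mul_sub, Nat.mul_one]
  omega

/-- The bad instance. -/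
noncomputable def GG (m : ℕ) (t : Fin m) : SimpleGraph (Fin (m ^ 2 + m)) where
  Adj u v := u ≠ v ∧ (((u:ℕ) < m ∧ (v:ℕ) < m) ∨ (m ≤ (u:ℕ) ∧ m ≤ (v:ℕ) ∧ (t:ℕ) + 1 < m))
  symm := by constructor; intro u v h; exact ⟨Ne.symm h.1, by tauto⟩
  loopless := by constructor; intro u h; exact h.1 rfl

lemma GG_adj {m : ℕ} (t : Fin m) (u v : Fin (m ^ 2 + m)) :
    (GG m t).Adj u v ↔ u ≠ v ∧
      (((u:ℕ) < m ∧ (v:ℕ) < m) ∨ (m ≤ (u:ℕ) ∧ m ≤ (v:ℕ) ∧ (t:ℕ) + 1 < m)) := Iff.rfl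

lemma cardLT {N m : ℕ} (h : m ≤ N) :
    (Finset.univ.filter fun v : Fin N => (v:ℕ) < m).card = m := by
  have himg : (Finset.univ.filter fun v : Fin N => (v:ℕ) < m).image Fin.val
      = Finset.range m := by
    ext k
    simp only [Finset.mem_image, Finset.mem_filter, Finset.mem_univ, true_and, Finset.mem_range]
    constructor
    · rintro ⟨v, hv, rfl⟩; exact hv
    · intro hk; exact ⟨⟨k, lt_of_lt_of_le hk h⟩, hk, rfl⟩
  have := Finset.card_image_of_injective
    (Finset.univ.filter fun v : Fin N => (v:ℕ) < m) (Fin.val_injective)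
  rw [himg, Finset.card_range] at this
  omega

lemma cardGE (m : ℕ) :
    (Finset.univ.filter fun v : Fin (m ^ 2 + m) => m ≤ (v:ℕ)).card = m ^ 2 := by
  have h1 := Finset.card_filter_add_card_filter_not
    (s := (Finset.univ : Finset (Fin (m ^ 2 + m)))) (p := fun v => (v:ℕ) < m)
  have h2 : (Finset.univ.filter fun v : Fin (m ^ 2 + m) => ¬ (v:ℕ) < m)
      = Finset.univ.filter fun v : Fin (m ^ 2 + m) => m ≤ (v:ℕ) := by
    apply Finset.filter_congr; intro v _; simp [not_lt]
  have h3 : m ≤ m ^ 2 + m := Nat.le_add_left _ _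
  rw [cardLT h3, h2] at h1
  simp only [Finset.card_univ, Fintype.card_fin] at h1
  omega

lemma cardT {m : ℕ} :
    (Finset.univ.filter fun t : Fin m => (t:ℕ) + 1 < m).card = m - 1 := by
  have himg : (Finset.univ.filter fun t : Fin m => (t:ℕ) + 1 < m).image Fin.val
      = Finset.range (m - 1) := by
    ext k
    simp only [Finset.mem_image, Finset.mem_filter, Finset.mem_univ, true_and, Finset.mem_range]
    constructor
    · rintro ⟨v, hv, rfl⟩; omega
    · intro hk
      refine ⟨⟨k, ?_⟩, ?_, rfl⟩
      · omega
      · show k + 1 < m; omega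
  have := Finset.card_image_of_injective
    (Finset.univ.filter fun t : Fin m => (t:ℕ) + 1 < m) (Fin.val_injective)
  rw [himg, Finset.card_range] at this
  omega

lemma degIn_A {m : ℕ} (t : Fin m) (S : Finset (Fin (m ^ 2 + m))) (u : Fin (m ^ 2 + m))
    (hu : (u:ℕ) < m) :
    degIn (GG m t) S u = ((S.filter fun v : Fin (m ^ 2 + m) => (v:ℕ) < m).erase u).card := by
  have hset : (S.filter fun v => (GG m t).Adj u v)
      = (S.filter fun v : Fin (m ^ 2 + m) => (v:ℕ) < m).erase u := by
    ext v
    simp only [Finset.mem_filter, Finset.mem_erase, GG_adj]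
    constructor
    · rintro ⟨hvS, hne, (⟨_, hv⟩ | ⟨hu', _⟩)⟩
      · exact ⟨Ne.symm hne, hvS, hv⟩
      · omega
    · rintro ⟨hne, hvS, hv⟩
      exact ⟨hvS, Ne.symm hne, Or.inl ⟨hu, hv⟩⟩
  unfold degIn
  rw [hset]

lemma degIn_B {m : ℕ} (t : Fin m) (ht : (t:ℕ) + 1 < m) (S : Finset (Fin (m ^ 2 + m)))
    (u : Fin (m ^ 2 + m)) (hu : m ≤ (u:ℕ)) :
    degIn (GG m t) S u = ((S.filter fun v : Fin (m ^ 2 + m) => m ≤ (v:ℕ)).erase u).card := by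
  have hset : (S.filter fun v => (GG m t).Adj u v)
      = (S.filter fun v : Fin (m ^ 2 + m) => m ≤ (v:ℕ)).erase u := by
    ext v
    simp only [Finset.mem_filter, Finset.mem_erase, GG_adj]
    constructor
    · rintro ⟨hvS, hne, (⟨hu', _⟩ | ⟨_, hv, _⟩)⟩
      · omega
      · exact ⟨Ne.symm hne, hvS, hv⟩
    · rintro ⟨hne, hvS, hv⟩
      exact ⟨hvS, Ne.symm hne, Or.inr ⟨hu, hv, ht⟩⟩
  unfold degIn
  rw [hset]

lemma degIn_B0 {m : ℕ} (t : Fin m) (ht : ¬ ((t:ℕ) + 1 < m)) (S : Finset (Fin (m ^ 2 + m)))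
    (u : Fin (m ^ 2 + m)) (hu : m ≤ (u:ℕ)) :
    degIn (GG m t) S u = 0 := by
  unfold degIn
  rw [Finset.card_eq_zero, Finset.filter_eq_empty_iff]
  intro v _
  simp only [GG_adj, not_and, not_or]
  intro _
  constructor <;> intro h <;> omega

lemma sumDeg_A {m : ℕ} (S : Finset (Fin (m ^ 2 + m))) (u : Fin (m ^ 2 + m))
    (huS : u ∈ S) (hu : (u:ℕ) < m) :
    ∑ t : Fin m, degIn (GG m t) S u
      = m * ((S.filter fun v : Fin (m ^ 2 + m) => (v:ℕ) < m).card - 1) := by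
  have huf : u ∈ S.filter fun v : Fin (m ^ 2 + m) => (v:ℕ) < m :=
    Finset.mem_filter.mpr ⟨huS, hu⟩
  calc ∑ t : Fin m, degIn (GG m t) S u
      = ∑ _t : Fin m, ((S.filter fun v : Fin (m ^ 2 + m) => (v:ℕ) < m).card - 1) := by
        apply Finset.sum_congr rfl
        intro t _
        rw [degIn_A t S u hu, Finset.card_erase_of_mem huf]
    _ = m * ((S.filter fun v : Fin (m ^ 2 + m) => (v:ℕ) < m).card - 1) := by
        rw [Finset.sum_const, Finset.card_univ, Fintype.card_fin, smul_eq_mul]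

lemma sumDeg_B {m : ℕ} (S : Finset (Fin (m ^ 2 + m))) (u : Fin (m ^ 2 + m))
    (huS : u ∈ S) (hu : m ≤ (u:ℕ)) :
    ∑ t : Fin m, degIn (GG m t) S u
      = (m - 1) * ((S.filter fun v : Fin (m ^ 2 + m) => m ≤ (v:ℕ)).card - 1) := by
  have huf : u ∈ S.filter fun v : Fin (m ^ 2 + m) => m ≤ (v:ℕ) :=
    Finset.mem_filter.mpr ⟨huS, hu⟩
  calc ∑ t : Fin m, degIn (GG m t) S u
      = ∑ t : Fin m, (if (t:ℕ) + 1 < m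
          then ((S.filter fun v : Fin (m ^ 2 + m) => m ≤ (v:ℕ)).card - 1) else 0) := by
        apply Finset.sum_congr rfl
        intro t _
        by_cases ht : (t:ℕ) + 1 < m
        · rw [if_pos ht, degIn_B t ht S u hu, Finset.card_erase_of_mem huf]
        · rw [if_neg ht, degIn_B0 t ht S u hu]
    _ = (m - 1) * ((S.filter fun v : Fin (m ^ 2 + m) => m ≤ (v:ℕ)).card - 1) := by
        rw [← Finset.sum_filter, Finset.sum_const, smul_eq_mul, cardT]

lemma filterLT_card_le {m : ℕ} (S : Finset (Fin (m ^ 2 + m))) :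
    (S.filter fun v : Fin (m ^ 2 + m) => (v:ℕ) < m).card ≤ m := by
  calc (S.filter fun v : Fin (m ^ 2 + m) => (v:ℕ) < m).card
      ≤ (Finset.univ.filter fun v : Fin (m ^ 2 + m) => (v:ℕ) < m).card :=
        Finset.card_le_card (Finset.filter_subset_filter _ (Finset.subset_univ S))
    _ = m := cardLT (Nat.le_add_left _ _)

lemma score_comp {m : ℕ} (hm : 3 ≤ m) (S : Finset (Fin (m ^ 2 + m)))
    (hB : ∀ w : Fin (m ^ 2 + m), m ≤ (w:ℕ) → w ∈ S)
    (a : Fin (m ^ 2 + m)) (haS : a ∈ S) (ha : (a:ℕ) < m)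
    (b : Fin (m ^ 2 + m)) (hbS : b ∈ S) (hb : m ≤ (b:ℕ)) :
    scoreA (GG m) S a < scoreA (GG m) S b := by
  have hbC : (S.filter fun v : Fin (m ^ 2 + m) => m ≤ (v:ℕ)).card = m ^ 2 := by
    have he : (S.filter fun v : Fin (m ^ 2 + m) => m ≤ (v:ℕ))
        = Finset.univ.filter fun v : Fin (m ^ 2 + m) => m ≤ (v:ℕ) := by
      ext w
      simp only [Finset.mem_filter, Finset.mem_univ, true_and]
      exact ⟨fun h => h.2, fun h => ⟨hB w h, h⟩⟩
    rw [he]; exact cardGE m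
  have haC := filterLT_card_le S
  have hsum : ∑ t : Fin m, degIn (GG m t) S a < ∑ t : Fin m, degIn (GG m t) S b := by
    rw [sumDeg_A S a haS ha, sumDeg_B S b hbS hb, hbC]
    have h1 : m * ((S.filter fun v : Fin (m ^ 2 + m) => (v:ℕ) < m).card - 1) ≤ m * (m - 1) :=
      Nat.mul_le_mul_left _ (by omega)
    have h2 : m * (m - 1) < (m - 1) * (m ^ 2 - 1) := by
      have hsq : m ^ 2 = m * m := sq m
      have h3m : 3 * m ≤ m * m := Nat.mul_le_mul_right m hm
      have hmm : m < m ^ 2 - 1 := by omega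
      calc m * (m - 1) = (m - 1) * m := Nat.mul_comm _ _
        _ < (m - 1) * (m ^ 2 - 1) :=
          mul_lt_mul' (le_refl (m - 1)) hmm (Nat.zero_le _) (by omega)
    omega
  unfold scoreA
  have hc : ∀ u : Fin (m ^ 2 + m), ∑ t : Fin m, (degIn (GG m t) S u : ℝ)
      = ((∑ t : Fin m, degIn (GG m t) S u : ℕ) : ℝ) := by
    intro u; rw [Nat.cast_sum]
  rw [hc, hc]
  apply mul_lt_mul_of_pos_left (Nat.cast_lt.mpr hsum)
  positivity

lemma fma_le_one {m : ℕ} (hm : 3 ≤ m) (S : Finset (Fin (m ^ 2 + m)))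
    (h : (∀ w : Fin (m ^ 2 + m), m ≤ (w:ℕ) → w ∈ S) ∨ (∀ w ∈ S, m ≤ (w:ℕ))) :
    fma (GG m) S ≤ 1 := by
  set tl : Fin m := ⟨m - 1, by omega⟩ with htl
  have htl' : ¬ ((tl:ℕ) + 1 < m) := by simp [htl]; omega
  have hle : fma (GG m) S ≤ avgDensity (GG m tl) S := by
    apply csInf_le
    · refine ⟨0, ?_⟩
      rintro x ⟨t, rfl⟩
      unfold avgDensity
      positivity
    · exact ⟨tl, rfl⟩
  refine hle.trans ?_
  rcases h with hL | hR
  · -- B ⊆ S : few edges in last snapshot, many vertices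
    have hEsub : ((S ×ˢ S).filter fun p => p.1 < p.2 ∧ (GG m tl).Adj p.1 p.2)
        ⊆ (((S.filter fun v : Fin (m ^ 2 + m) => (v:ℕ) < m) ×ˢ
            (S.filter fun v : Fin (m ^ 2 + m) => (v:ℕ) < m)).filter fun p => p.1 < p.2) := by
      intro p hp
      simp only [Finset.mem_filter, Finset.mem_product, GG_adj] at hp ⊢
      obtain ⟨⟨h1, h2⟩, hlt, _, (⟨ha1, ha2⟩ | ⟨_, _, hbad⟩)⟩ := hp
      · exact ⟨⟨⟨h1, ha1⟩, h2, ha2⟩, hlt⟩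
      · exact absurd hbad htl'
    have hE2 : edgesIn (GG m tl) S * 2 ≤ m * (m - 1) := by
      have h1 : edgesIn (GG m tl) S
          ≤ (((S.filter fun v : Fin (m ^ 2 + m) => (v:ℕ) < m) ×ˢ
              (S.filter fun v : Fin (m ^ 2 + m) => (v:ℕ) < m)).filter
              fun p => p.1 < p.2).card := Finset.card_le_card hEsub
      have h2 := pairCount (S.filter fun v : Fin (m ^ 2 + m) => (v:ℕ) < m)
      have h3 := filterLT_card_le S
      have h4 : (S.filter fun v : Fin (m ^ 2 + m) => (v:ℕ) < m).card *
          ((S.filter fun v : Fin (m ^ 2 + m) => (v:ℕ) < m).card - 1) ≤ m * (m - 1) :=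
        Nat.mul_le_mul h3 (by omega)
      omega
    have hcard : m ^ 2 ≤ S.card := by
      calc m ^ 2 = (Finset.univ.filter fun v : Fin (m ^ 2 + m) => m ≤ (v:ℕ)).card :=
            (cardGE m).symm
        _ ≤ S.card := Finset.card_le_card (by
            intro w hw
            simp only [Finset.mem_filter, Finset.mem_univ, true_and] at hw
            exact hL w hw)
    have hm2 : 0 < m ^ 2 := by positivity
    have hpos : 0 < S.card := by omega
    have h5 : m * (m - 1) ≤ m ^ 2 := by
      rw [pow_two]; exact Nat.mul_le_mul_left _ (by omega)
    unfold avgDensity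
    rw [div_le_one (by exact_mod_cast hpos)]
    have h6 : (edgesIn (GG m tl) S * 2 : ℕ) ≤ S.card := by omega
    calc (2 : ℝ) * (edgesIn (GG m tl) S : ℝ) = ((edgesIn (GG m tl) S * 2 : ℕ) : ℝ) := by
          push_cast; ring
      _ ≤ (S.card : ℝ) := Nat.cast_le.mpr h6
  · -- S ⊆ B : no edges at all in last snapshot
    have hE : edgesIn (GG m tl) S = 0 := by
      unfold edgesIn
      rw [Finset.card_eq_zero, Finset.filter_eq_empty_iff]
      rintro ⟨p1, p2⟩ hp
      simp only [Finset.mem_product] at hp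
      intro hcon
      obtain ⟨hlt, hne, (⟨h1, _⟩ | ⟨_, _, hbad⟩)⟩ := hcon
      · exact absurd h1 (not_lt.mpr (hR p1 hp.1))
      · exact htl' hbad
    unfold avgDensity
    rw [hE]
    simp

lemma avg_Sstar {m : ℕ} (hm : 3 ≤ m) (t : Fin m) :
    avgDensity (GG m t) (Finset.univ.filter fun v : Fin (m ^ 2 + m) => (v:ℕ) < m)
      = (m : ℝ) - 1 := by
  set A := Finset.univ.filter fun v : Fin (m ^ 2 + m) => (v:ℕ) < m with hA
  have hcA : A.card = m := cardLT (Nat.le_add_left _ _)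
  have hfe : ((A ×ˢ A).filter fun p => p.1 < p.2 ∧ (GG m t).Adj p.1 p.2)
      = (A ×ˢ A).filter fun p => p.1 < p.2 := by
    apply Finset.filter_congr
    rintro ⟨p1, p2⟩ hp
    simp only [Finset.mem_product, hA, Finset.mem_filter, Finset.mem_univ, true_and] at hp
    simp only [GG_adj]
    constructor
    · tauto
    · intro hlt
      exact ⟨hlt, ne_of_lt hlt, Or.inl ⟨hp.1, hp.2⟩⟩
  have hE : edgesIn (GG m t) A * 2 = m * (m - 1) := by
    unfold edgesIn
    rw [hfe, pairCount, hcA]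
  unfold avgDensity
  have hcast : 2 * (edgesIn (GG m t) A : ℝ) = (m : ℝ) * ((m : ℝ) - 1) := by
    have : ((edgesIn (GG m t) A * 2 : ℕ) : ℝ) = ((m * (m - 1) : ℕ) : ℝ) := by rw [hE]
    push_cast [Nat.cast_sub (by omega : 1 ≤ m)] at this
    linarith
  rw [hcast, hcA]
  field_simp

lemma fma_Sstar {m : ℕ} (hm : 3 ≤ m) :
    fma (GG m) (Finset.univ.filter fun v : Fin (m ^ 2 + m) => (v:ℕ) < m) = (m : ℝ) - 1 := by
  unfold fma
  have hfun : (fun t : Fin m => avgDensity (GG m t)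
      (Finset.univ.filter fun v : Fin (m ^ 2 + m) => (v:ℕ) < m)) = fun _ => (m : ℝ) - 1 :=
    funext fun t => avg_Sstar hm t
  rw [hfun]
  haveI : Nonempty (Fin m) := ⟨⟨0, by omega⟩⟩
  rw [Set.range_const]
  exact csInf_singleton _

/-- For every `m ≥ 3` there is a graph history with `τ = m` snapshots on
`n = m² + m` vertices on which every `score_a` peeling chain only contains sets of
`f_ma`-value at most `1`, while some set of `m` vertices has `f_ma`-value `m - 1`;
hence `FindBFF_A` has approximation ratio `O(1/√n)` for the BFF-ma problem. -/
theorem findBffA_bad_for_bff_ma (m : ℕ) (hm : 3 ≤ m) :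
    ∃ G : Fin m → SimpleGraph (Fin (m ^ 2 + m)),
      (∀ (S : ℕ → Finset (Fin (m ^ 2 + m))) (v : ℕ → Fin (m ^ 2 + m)),
        IsScoreAPeeling G S v → ∀ i < m ^ 2 + m, fma G (S i) ≤ 1) ∧
      ∃ Sstar : Finset (Fin (m ^ 2 + m)), Sstar.card = m ∧
        fma G Sstar = (m : ℝ) - 1 := by
  refine ⟨GG m, ?_, ?_⟩
  · intro S v hpeel i hi
    have key : ∀ j, j < m ^ 2 + m →
        ((∀ w : Fin (m ^ 2 + m), m ≤ (w:ℕ) → w ∈ S j) ∨ (∀ w ∈ S j, m ≤ (w:ℕ))) := by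
      intro j
      induction j with
      | zero =>
        intro _
        left
        intro w _
        rw [hpeel.1]
        exact Finset.mem_univ w
      | succ j ih =>
        intro hj
        have hj' : j < m ^ 2 + m - 1 := by omega
        obtain ⟨hv, hS, hmin⟩ := hpeel.2 j hj'
        rcases ih (by omega) with hL | hR
        · by_cases hA : ∃ a ∈ S j, (a:ℕ) < m
          · obtain ⟨a, haS, ha⟩ := hA
            left
            intro w hw
            rw [hS, Finset.mem_sdiff, Finset.mem_singleton]
            refine ⟨hL w hw, fun hwv => ?_⟩
            have h1 := hmin a haS
            have h2 := score_comp hm (S j) hL a haS ha (v j) hv (hwv ▸ hw)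
            linarith
          · push_neg at hA
            right
            intro w hw
            rw [hS, Finset.mem_sdiff] at hw
            exact hA w hw.1
        · right
          intro w hw
          rw [hS, Finset.mem_sdiff] at hw
          exact hR w hw.1
    exact fma_le_one hm (S i) (key i hi)
  · exact ⟨Finset.univ.filter fun v : Fin (m ^ 2 + m) => (v:ℕ) < m,
      cardLT (Nat.le_add_left _ _), fma_Sstar hm⟩
end

section
/- Let G be a simple undirected graph on the finite vertex set V = {1, …, n}, and for each i ∈ V let H_i be the star graph on V whose edge set is {{i, j} : {i, j} ∈ E(G)}. Then for every integer k with 2 ≤ k ≤ n: G contains a clique of size at least k if and only if there exist a nonempty subset S ⊆ V and a k-element subset C ⊆ {1, …, n} such that min_{i ∈ C} d_m(S, H_i) ≥ 1. -/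
open scoped Classical
open Finset

/-- The star snapshot `H_i`: the graph on the vertices of `G` whose edge set is
`{{i, j} : {i, j} ∈ E(G)}`. -/
def starAt {n : ℕ} (G : SimpleGraph (Fin n)) (i : Fin n) : SimpleGraph (Fin n) where
  Adj a b := (a = i ∧ G.Adj i b) ∨ (b = i ∧ G.Adj a i)
  symm := by
    constructor
    intro a b h
    rcases h with ⟨ha, hadj⟩ | ⟨hb, hadj⟩
    · exact Or.inr ⟨ha, hadj.symm⟩
    · exact Or.inl ⟨hb, hadj.symm⟩
  loopless := by
    constructor
    intro a h
    rcases h with ⟨ha, hadj⟩ | ⟨ha, hadj⟩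
    · subst ha; exact G.irrefl hadj
    · subst ha; exact G.irrefl hadj

lemma one_le_degIn_iff {n : ℕ} (H : SimpleGraph (Fin n)) (S : Finset (Fin n)) (u : Fin n) :
    1 ≤ degIn H S u ↔ ∃ v ∈ S, H.Adj u v := by
  rw [degIn, Nat.one_le_iff_ne_zero, ← Nat.pos_iff_ne_zero, Finset.card_pos,
    Finset.filter_nonempty_iff]

/-- Correctness of the reduction from Maximum Clique for the O²BFF-mm problem:
`G` has a clique of size at least `k` iff there are a nonempty `S ⊆ V` and a `k`-element set
`C` of star snapshots with `min_{i ∈ C} d_m(S, H_i) ≥ 1`. -/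
theorem o2bff_mm_clique_reduction {n : ℕ} (G : SimpleGraph (Fin n)) (k : ℕ)
    (hk2 : 2 ≤ k) (hkn : k ≤ n) :
    (∃ K : Finset (Fin n), k ≤ K.card ∧ G.IsClique (K : Set (Fin n))) ↔
      ∃ (S C : Finset (Fin n)), S.Nonempty ∧ C.card = k ∧
        ∀ i ∈ C, 1 ≤ minDensity (starAt G i) S := by
  constructor
  · rintro ⟨K, hKcard, hKclique⟩
    obtain ⟨C, hCK, hCcard⟩ := Finset.exists_subset_card_eq hKcard
    have hKne : K.Nonempty := Finset.card_pos.mp (by omega)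
    refine ⟨K, C, hKne, hCcard, ?_⟩
    intro i hiC
    have hiK : i ∈ K := hCK hiC
    apply le_csInf
    · obtain ⟨u, hu⟩ := hKne
      exact ⟨_, ⟨u, hu, rfl⟩⟩
    · rintro m ⟨u, huK, rfl⟩
      rw [one_le_degIn_iff]
      by_cases hui : u = i
      · subst hui
        obtain ⟨v, hvK, hvu⟩ := Finset.exists_mem_ne (s := K) (by omega) u
        exact ⟨v, hvK, Or.inl ⟨rfl, hKclique hiK hvK (Ne.symm hvu)⟩⟩
      · exact ⟨i, hiK, Or.inr ⟨rfl, hKclique huK hiK hui⟩⟩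
  · rintro ⟨S, C, hSne, hCcard, h⟩
    -- from the hypothesis, every vertex of S has a star-neighbor in S
    have hdeg : ∀ i ∈ C, ∀ u ∈ S, ∃ v ∈ S, (starAt G i).Adj u v := by
      intro i hi u hu
      have h1 := h i hi
      have h2 : minDensity (starAt G i) S ≤ degIn (starAt G i) S u :=
        Nat.sInf_le ⟨u, hu, rfl⟩
      exact (one_le_degIn_iff _ _ _).mp (le_trans h1 h2)
    -- S has at least two elements
    have hCne : C.Nonempty := Finset.card_pos.mp (by omega)
    have hS2 : 1 < S.card := by
      obtain ⟨i, hi⟩ := hCne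
      obtain ⟨u, hu⟩ := hSne
      obtain ⟨v, hv, hadj⟩ := hdeg i hi u hu
      exact Finset.one_lt_card.mpr ⟨u, hu, v, hv, (starAt G i).ne_of_adj hadj⟩
    -- each i ∈ C lies in S and is adjacent to everything else in S
    have key : ∀ i ∈ C, i ∈ S ∧ ∀ u ∈ S, u ≠ i → G.Adj u i := by
      intro i hi
      have huadj : ∀ u ∈ S, u ≠ i → i ∈ S ∧ G.Adj u i := by
        intro u hu hui
        obtain ⟨v, hv, hadj⟩ := hdeg i hi u hu
        rcases hadj with ⟨h1, _⟩ | ⟨h1, h2⟩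
        · exact absurd h1 hui
        · exact ⟨h1 ▸ hv, h2⟩
      obtain ⟨u, hu, hui⟩ := Finset.exists_mem_ne hS2 i
      refine ⟨(huadj u hu hui).1, fun w hw hwi => (huadj w hw hwi).2⟩
    refine ⟨C, le_of_eq hCcard.symm, ?_⟩
    intro i hi j hj hij
    exact (key j hj).2 i (key i hi).1 hij
end

section
/- Let G be a simple undirected graph on the finite vertex set V, and for each edge e ∈ E(G) let H_e be the graph on V whose only edge is e. Let k ≥ 2 be an integer and K = k(k−1)/2. Then: G contains a clique of size at least k if and only if there exist a nonempty subset S ⊆ V and a K-element subset C ⊆ E(G) such that (1/K)·Σ_{e ∈ C} d_a(S, H_e) ≥ 2/k. -/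
open scoped Classical
open Finset

/-- The single-edge snapshot `H_e`: the graph on the vertices of `G` whose only edge is `e`. -/
def edgeGraph {n : ℕ} (e : Sym2 (Fin n)) : SimpleGraph (Fin n) where
  Adj a b := a ≠ b ∧ s(a, b) = e
  symm := by
    constructor
    intro a b h
    exact ⟨h.1.symm, by rw [Sym2.eq_swap]; exact h.2⟩
  loopless := by
    constructor
    intro a h
    exact h.1 rfl

lemma edgeGraph_adj {n : ℕ} (e : Sym2 (Fin n)) (a b : Fin n) :
    (edgeGraph e).Adj a b ↔ a ≠ b ∧ s(a, b) = e := Iff.rfl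

/-- map an unordered pair to the corresponding finset -/
noncomputable def pairFinset {n : ℕ} : Sym2 (Fin n) → Finset (Fin n) :=
  Sym2.lift ⟨fun a b => {a, b}, fun a b => Finset.pair_comm a b⟩

@[simp] lemma pairFinset_mk {n : ℕ} (a b : Fin n) : pairFinset s(a, b) = {a, b} := rfl

lemma card_offDiag_sym2 {n : ℕ} (S : Finset (Fin n)) :
    (S.sym2.filter fun e => ¬ e.IsDiag).card = S.card * (S.card - 1) / 2 := by
  rw [← Nat.choose_two_right, ← Finset.card_powersetCard]
  apply Finset.card_bij (fun e _ => pairFinset e)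
  · intro e he
    induction e using Sym2.ind with
    | _ a b =>
      simp only [mem_filter, mk_mem_sym2_iff, Sym2.mk_isDiag_iff] at he
      rw [pairFinset_mk, Finset.mem_powersetCard]
      refine ⟨?_, Finset.card_pair he.2⟩
      intro x hx
      rcases Finset.mem_insert.1 hx with rfl | hx
      · exact he.1.1
      · rw [Finset.mem_singleton.1 hx]; exact he.1.2
  · intro e1 h1 e2 h2 heq
    induction e1 using Sym2.ind with
    | _ a b =>
      induction e2 using Sym2.ind with
      | _ c d =>
        simp only [mem_filter, Sym2.mk_isDiag_iff] at h1 h2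
        simp only [pairFinset_mk] at heq
        have ha : a ∈ ({c, d} : Finset (Fin n)) := heq ▸ Finset.mem_insert_self a {b}
        have hb : b ∈ ({c, d} : Finset (Fin n)) := heq ▸ Finset.mem_insert_of_mem (Finset.mem_singleton_self b)
        rw [Finset.mem_insert, Finset.mem_singleton] at ha hb
        rw [Sym2.eq_iff]
        rcases ha with rfl | rfl
        · rcases hb with rfl | rfl
          · exact absurd rfl h1.2
          · exact Or.inl ⟨rfl, rfl⟩
        · rcases hb with rfl | rfl
          · exact Or.inr ⟨rfl, rfl⟩
          · exact absurd rfl h1.2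
  · intro t ht
    rw [Finset.mem_powersetCard] at ht
    obtain ⟨a, b, hab, rfl⟩ := Finset.card_eq_two.1 ht.2
    refine ⟨s(a, b), ?_, rfl⟩
    simp only [mem_filter, mk_mem_sym2_iff, Sym2.mk_isDiag_iff]
    exact ⟨⟨ht.1 (Finset.mem_insert_self a {b}), ht.1 (Finset.mem_insert_of_mem (Finset.mem_singleton_self b))⟩, hab⟩

lemma edgesIn_edgeGraph_lt {n : ℕ} (S : Finset (Fin n)) {a b : Fin n} (hab : a < b) :
    edgesIn (edgeGraph s(a, b)) S = if a ∈ S ∧ b ∈ S then 1 else 0 := by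
  unfold edgesIn
  by_cases hS : a ∈ S ∧ b ∈ S
  · rw [if_pos hS]
    have : ((S ×ˢ S).filter fun p => p.1 < p.2 ∧ (edgeGraph s(a, b)).Adj p.1 p.2) = {(a, b)} := by
      ext ⟨x, y⟩
      simp only [mem_filter, mem_product, mem_singleton, edgeGraph_adj, Sym2.eq_iff, Prod.mk.injEq]
      constructor
      · rintro ⟨⟨hx, hy⟩, hlt, hne, (⟨rfl, rfl⟩ | ⟨rfl, rfl⟩)⟩
        · exact ⟨rfl, rfl⟩
        · exact absurd hab (not_lt.2 hlt.le)
      · rintro ⟨rfl, rfl⟩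
        exact ⟨⟨hS.1, hS.2⟩, hab, hab.ne, Or.inl ⟨rfl, rfl⟩⟩
    rw [this, Finset.card_singleton]
  · rw [if_neg hS, Finset.card_eq_zero, Finset.filter_eq_empty_iff]
    rintro ⟨x, y⟩ hxy
    rw [Finset.mem_product] at hxy
    rintro ⟨hlt, hne, heq⟩
    rw [Sym2.eq_iff] at heq
    rcases heq with ⟨rfl, rfl⟩ | ⟨rfl, rfl⟩
    · exact hS ⟨hxy.1, hxy.2⟩
    · exact hS ⟨hxy.2, hxy.1⟩

lemma edgesIn_edgeGraph {n : ℕ} (S : Finset (Fin n)) {a b : Fin n} (hab : a ≠ b) :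
    edgesIn (edgeGraph s(a, b)) S = if a ∈ S ∧ b ∈ S then 1 else 0 := by
  rcases lt_or_gt_of_ne hab with h | h
  · exact edgesIn_edgeGraph_lt S h
  · rw [Sym2.eq_swap, edgesIn_edgeGraph_lt S h]
    simp only [and_comm]

lemma avgDensity_edgeGraph {n : ℕ} (S : Finset (Fin n)) {a b : Fin n} (hab : a ≠ b) :
    avgDensity (edgeGraph s(a, b)) S = if a ∈ S ∧ b ∈ S then 2 / (S.card : ℝ) else 0 := by
  unfold avgDensity
  rw [edgesIn_edgeGraph S hab]
  split_ifs <;> simp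

lemma two_mul_half_pred (j : ℕ) : 2 * (j * (j - 1) / 2) = j * (j - 1) := by
  have h : Even (j * (j - 1)) := by
    rcases Nat.even_or_odd j with h | h
    · exact h.mul_right _
    · exact (Nat.Odd.sub_odd h odd_one).mul_left _
  exact Nat.mul_div_cancel' h.two_dvd

/-- Correctness of the reduction from Maximum Clique for the O²BFF-aa problem:
`G` has a clique of size at least `k` iff there are a nonempty `S ⊆ V` and a set `C` of
`K = k(k-1)/2` single-edge snapshots `H_e`, `e ∈ E(G)`, with
`(1/K) · Σ_{e ∈ C} d_a(S, H_e) ≥ 2/k`. -/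
theorem o2bff_aa_clique_reduction {n : ℕ} (G : SimpleGraph (Fin n)) (k : ℕ) (hk : 2 ≤ k) :
    (∃ K : Finset (Fin n), k ≤ K.card ∧ G.IsClique (K : Set (Fin n))) ↔
      ∃ (S : Finset (Fin n)) (C : Finset (Sym2 (Fin n))), S.Nonempty ∧
        (∀ e ∈ C, e ∈ G.edgeSet) ∧ C.card = k * (k - 1) / 2 ∧
        2 / (k : ℝ) ≤
          (1 / ((k * (k - 1) / 2 : ℕ) : ℝ)) * ∑ e ∈ C, avgDensity (edgeGraph e) S := by
  have hKnat : 1 ≤ k * (k - 1) / 2 := by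
    calc 1 ≤ k - 1 := by omega
      _ = 2 * (k - 1) / 2 := (Nat.mul_div_cancel_left _ (by norm_num)).symm
      _ ≤ k * (k - 1) / 2 := Nat.div_le_div_right (Nat.mul_le_mul_right _ hk)
  have hKne : ((k * (k - 1) / 2 : ℕ) : ℝ) ≠ 0 := by
    have : (0:ℕ) < k * (k - 1) / 2 := hKnat
    exact_mod_cast this.ne'
  constructor
  · rintro ⟨K, hK, hcl⟩
    obtain ⟨S, hSK, hScard⟩ := Finset.exists_subset_card_eq hK
    refine ⟨S, S.sym2.filter fun e => ¬ e.IsDiag, ?_, ?_, ?_, ?_⟩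
    · rw [← Finset.card_pos, hScard]; omega
    · intro e he
      induction e using Sym2.ind with
      | _ a b =>
        simp only [mem_filter, mk_mem_sym2_iff, Sym2.mk_isDiag_iff] at he
        exact G.mem_edgeSet.2 (hcl (Finset.mem_coe.2 (hSK he.1.1))
          (Finset.mem_coe.2 (hSK he.1.2)) he.2)
    · rw [card_offDiag_sym2, hScard]
    · have hsum : ∀ e ∈ (S.sym2.filter fun e => ¬ e.IsDiag),
          avgDensity (edgeGraph e) S = 2 / (k : ℝ) := by
        intro e he
        induction e using Sym2.ind with
        | _ a b =>
          simp only [mem_filter, mk_mem_sym2_iff, Sym2.mk_isDiag_iff] at he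
          rw [avgDensity_edgeGraph S he.2, if_pos ⟨he.1.1, he.1.2⟩, hScard]
      rw [Finset.sum_congr rfl hsum, Finset.sum_const, card_offDiag_sym2, hScard, nsmul_eq_mul,
        one_div, inv_mul_cancel_left₀ hKne]
  · rintro ⟨S, C, hSne, hCE, hCcard, hineq⟩
    have hs0 : 0 < S.card := Finset.card_pos.2 hSne
    set D := C.filter (fun e => ∀ v ∈ e, v ∈ S) with hDdef
    have hsum : ∀ e ∈ C, avgDensity (edgeGraph e) S
        = if (∀ v ∈ e, v ∈ S) then 2 / (S.card : ℝ) else 0 := by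
      intro e he
      induction e using Sym2.ind with
      | _ a b =>
        have hab : a ≠ b := (G.mem_edgeSet.1 (hCE _ he)).ne
        have hiff : (∀ v ∈ s(a, b), v ∈ S) ↔ (a ∈ S ∧ b ∈ S) := by
          simp [Sym2.mem_iff, or_imp, forall_and, forall_eq]
        rw [avgDensity_edgeGraph S hab]
        simp only [hiff]
    rw [Finset.sum_congr rfl hsum, ← Finset.sum_filter, Finset.sum_const, nsmul_eq_mul] at hineq
    -- hineq : 2 / k ≤ 1 / ↑(k*(k-1)/2) * (↑D.card * (2 / ↑S.card))
    have hk0R : (0:ℝ) < (k:ℝ) := by exact_mod_cast (by omega : 0 < k)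
    have hs0R : (0:ℝ) < (S.card:ℝ) := by exact_mod_cast hs0
    have hK0R : (0:ℝ) < ((k * (k - 1) / 2 : ℕ) : ℝ) := lt_of_le_of_ne (by positivity) (Ne.symm hKne)
    have key : (k * (k - 1) / 2 : ℕ) * S.card ≤ D.card * k := by
      have : ((k * (k - 1) / 2 : ℕ) : ℝ) * S.card ≤ (D.card : ℝ) * k := by
        rw [div_le_iff₀ hk0R] at hineq
        simp only [div_eq_mul_inv, one_mul] at hineq
        have hKi : ((k * (k - 1) / 2 : ℕ) : ℝ)⁻¹ * ((k * (k - 1) / 2 : ℕ) : ℝ) = 1 :=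
          inv_mul_cancel₀ hKne
        have hsi : ((S.card : ℝ))⁻¹ * (S.card : ℝ) = 1 := inv_mul_cancel₀ hs0R.ne'
        have hsne' : ((S.card : ℝ)) ≠ 0 := hs0R.ne'
        have hmul := mul_le_mul_of_nonneg_left hineq (mul_pos hK0R hs0R).le
        have hmul2 : ((k * (k - 1) / 2 : ℕ) : ℝ) * S.card * 2 ≤ 2 * ((D.card : ℝ) * k) :=
          hmul.trans_eq (by field_simp; ring)
        linarith
      exact_mod_cast this
    have hmK : D.card ≤ k * (k - 1) / 2 := hCcard ▸ Finset.card_filter_le C _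
    have hDsub : D ⊆ S.sym2.filter fun e => ¬ e.IsDiag := by
      intro e he
      rw [mem_filter] at he ⊢
      exact ⟨Finset.mem_sym2_iff.2 he.2, G.not_isDiag_of_mem_edgeSet (hCE _ he.1)⟩
    have hm2 : D.card ≤ S.card * (S.card - 1) / 2 :=
      (Finset.card_le_card hDsub).trans (card_offDiag_sym2 S).le
    have hsk1 : S.card ≤ k := by
      have h1 : (k * (k - 1) / 2) * S.card ≤ (k * (k - 1) / 2) * k :=
        key.trans (Nat.mul_le_mul_right k hmK)
      exact Nat.le_of_mul_le_mul_left h1 hKnat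
    have hks : k ≤ S.card := by
      have step : k * (k - 1) * S.card ≤ S.card * (S.card - 1) * k := by
        calc k * (k - 1) * S.card = 2 * ((k * (k - 1) / 2) * S.card) := by
              rw [← Nat.mul_assoc, two_mul_half_pred]
          _ ≤ 2 * (D.card * k) := Nat.mul_le_mul_left 2 key
          _ = (2 * D.card) * k := by ring
          _ ≤ (S.card * (S.card - 1)) * k := by
              refine Nat.mul_le_mul_right k ?_
              calc 2 * D.card ≤ 2 * (S.card * (S.card - 1) / 2) := Nat.mul_le_mul_left 2 hm2
                _ = S.card * (S.card - 1) := two_mul_half_pred _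
      have h' : (k * S.card) * (k - 1) ≤ (k * S.card) * (S.card - 1) := by
        calc (k * S.card) * (k - 1) = k * (k - 1) * S.card := by ring
          _ ≤ S.card * (S.card - 1) * k := step
          _ = (k * S.card) * (S.card - 1) := by ring
      have := Nat.le_of_mul_le_mul_left h' (by positivity)
      omega
    have hsk : S.card = k := le_antisymm hsk1 hks
    have hKm : k * (k - 1) / 2 ≤ D.card := by
      have h1 := key
      rw [hsk] at h1
      exact Nat.le_of_mul_le_mul_right h1 (by omega)
    have hDeq : D = S.sym2.filter fun e => ¬ e.IsDiag := by
      apply Finset.eq_of_subset_of_card_le hDsub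
      rw [card_offDiag_sym2, hsk]
      exact hKm
    refine ⟨S, hks, ?_⟩
    intro u hu v hv huv
    have hmem : s(u, v) ∈ S.sym2.filter fun e => ¬ e.IsDiag := by
      simp only [mem_filter, mk_mem_sym2_iff, Sym2.mk_isDiag_iff]
      exact ⟨⟨hu, hv⟩, huv⟩
    rw [← hDeq, hDdef, mem_filter] at hmem
    exact G.mem_edgeSet.1 (hCE _ hmem.1)
end
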